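/- arXiv:1404.5524 — 8 statements merged into one kernel-verified Lean document; each statement's English description precedes it below -/
import Mathlib

section
/- The stoichiometric matrix Γ of the processive n-site phosphorylation network has rank 2n+1. -/
/-!
Each species of the network is produced by exactly one reaction and consumed by exactly one
other, so every row of `Γ` has the form `e_p - e_q`: `Γᵀ` is the incidence matrix of a directed
multigraph on the `2n+2` reactions with one edge per species. A vector in the kernel of `Γ` is
therefore constant along edges, and this graph contains the path through all reactions in their
natural order, so the kernel is spanned by the all-ones vector and rank–nullity gives `2n+1`.
-/

open Matrix Finset

noncomputable section

/-- The `m`-th (1-based) standard basis vector of `ℝ^(2n+4)`. -/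
def E (n : ℕ) (m : ℕ) : Fin (2*n+4) → ℝ := fun j => if (j : ℕ) + 1 = m then 1 else 0

/-- The value of a vector `x ∈ ℝ^(2n+4)` at the (1-based) math index `m`. -/
def X (n : ℕ) (x : Fin (2*n+4) → ℝ) (m : ℕ) : ℝ :=
  if h : m - 1 < 2*n+4 then x ⟨m - 1, h⟩ else 0

/-- The stoichiometric matrix `Γ` of the processive `n`-site phosphorylation network;
columns are indexed 1-based as in the paper. -/
def Gamma (n : ℕ) : Matrix (Fin (2*n+4)) (Fin (2*n+2)) ℝ :=
  Matrix.of fun r c0 =>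
    (let c := (c0 : ℕ) + 1
     if c = 1 then E n 5 - E n 1 - E n 3
     else if c ≤ n then E n (2*(c-1)+5) - E n (2*(c-1)+3)
     else if c = n+1 then E n 1 + E n 4 - E n (2*n+3)
     else if c = n+2 then E n (2*n+4) - E n 2 - E n 4
     else if c ≤ 2*n+1 then E n (2*n+4-2*(c-(n+2))) - E n (2*n+6-2*(c-(n+2)))
     else E n 2 + E n 3 - E n 6) r

/-- The mass-action reaction rate function `R : ℝ^(2n+4) → ℝ^(2n+2)` of the processive
`n`-site phosphorylation network (coordinates indexed 1-based). -/
def Rvec (n : ℕ) (k l : ℕ → ℝ) (x : Fin (2*n+4) → ℝ) : Fin (2*n+2) → ℝ := fun a0 =>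
  let a := (a0 : ℕ) + 1
  if a = 1 then k 1 * X n x 1 * X n x 3 - k 2 * X n x 5
  else if a ≤ n then
    k (2*(a-1)+1) * X n x (2*(a-1)+3) - k (2*(a-1)+2) * X n x (2*(a-1)+5)
  else if a = n+1 then k (2*n+1) * X n x (2*n+3)
  else if a = n+2 then l (2*n+1) * X n x 2 * X n x 4 - l (2*n) * X n x (2*n+4)
  else if a ≤ 2*n+1 then
    l (2*(n-(a-(n+2)))+1) * X n x (2*(n-(a-(n+2)))+6)
      - l (2*(n-(a-(n+2)))) * X n x (2*(n-(a-(n+2)))+4)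
  else l 1 * X n x 6

section IncidenceRows

variable {ι V K : Type*}

def incidenceGraph (p q : ι → V) : SimpleGraph V :=
  SimpleGraph.fromRel fun a b => ∃ r, p r = a ∧ q r = b

variable [Fintype V] [DecidableEq V] {p q : ι → V}

lemma mulVec_eq_sub_of_row_eq [NonAssocRing K] {M : Matrix ι V K}
    (hM : ∀ r, M r = Pi.single (p r) 1 - Pi.single (q r) 1) (v : V → K) :
    M *ᵥ v = fun r => v (p r) - v (q r) := by
  ext r
  rw [mulVec, hM, sub_dotProduct, single_dotProduct, single_dotProduct, one_mul, one_mul]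

lemma ker_mulVecLin_eq_span_one_of_row_eq [CommRing K] {M : Matrix ι V K}
    (hM : ∀ r, M r = Pi.single (p r) 1 - Pi.single (q r) 1)
    (hG : (incidenceGraph p q).Connected) :
    LinearMap.ker M.mulVecLin = K ∙ (1 : V → K) := by
  ext v
  rw [LinearMap.mem_ker, mulVecLin_apply, mulVec_eq_sub_of_row_eq hM, Submodule.mem_span_singleton]
  constructor
  · intro hv
    have hadj : ∀ a b, (incidenceGraph p q).Adj a b → v a = v b := by
      rintro a b ⟨-, ⟨r, rfl, rfl⟩ | ⟨r, rfl, rfl⟩⟩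
      · exact sub_eq_zero.mp (congrFun hv r)
      · exact (sub_eq_zero.mp (congrFun hv r)).symm
    obtain ⟨i⟩ := hG.nonempty
    refine ⟨v i, funext fun j => ?_⟩
    obtain ⟨w⟩ := hG.preconnected i j
    induction w with
    | nil => simp
    | cons h _ ih => simpa [hadj _ _ h] using ih
  · rintro ⟨c, rfl⟩
    ext r
    simp

lemma rank_eq_card_sub_one_of_row_eq [Field K] {M : Matrix ι V K}
    (hM : ∀ r, M r = Pi.single (p r) 1 - Pi.single (q r) 1)
    (hG : (incidenceGraph p q).Connected) :
    M.rank = Fintype.card V - 1 := by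
  have hone : (1 : V → K) ≠ 0 := fun h => one_ne_zero (congrFun h hG.nonempty.some)
  have := LinearMap.finrank_range_add_finrank_ker M.mulVecLin
  rw [ker_mulVecLin_eq_span_one_of_row_eq hM hG, finrank_span_singleton hone,
    Module.finrank_fintype_fun_eq_card] at this
  rw [rank, ← this, Nat.add_sub_cancel]

end IncidenceRows

-- Species and reactions are indexed from `0` here, while `Gamma` uses the paper's indices from `1`.
def producingReaction (n : ℕ) (s : Fin (2*n+4)) : Fin (2*n+2) :=
  ⟨if s.val = 0 ∨ s.val = 3 then n
    else if s.val = 1 ∨ s.val = 2 then 2*n+1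
    else if s.val % 2 = 0 then (s.val - 4) / 2
    else (4*n+5 - s.val) / 2, by split_ifs <;> omega⟩

def consumingReaction (n : ℕ) (s : Fin (2*n+4)) : Fin (2*n+2) :=
  ⟨if s.val = 0 ∨ s.val = 2 then 0
    else if s.val = 1 ∨ s.val = 3 then n+1
    else if s.val % 2 = 0 then (s.val - 2) / 2
    else (4*n+7 - s.val) / 2, by split_ifs <;> omega⟩

set_option maxHeartbeats 1000000 in
lemma Gamma_row_eq {n : ℕ} (hn : 1 ≤ n) (s : Fin (2*n+4)) :
    Gamma n s = Pi.single (producingReaction n s) 1 - Pi.single (consumingReaction n s) 1 := by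
  ext c
  have hs := s.isLt
  have hc := c.isLt
  simp only [Gamma, of_apply, Pi.sub_apply, Pi.single_apply, Fin.ext_iff, producingReaction,
    consumingReaction]
  split_ifs <;> (try omega) <;> simp only [E, Pi.sub_apply, Pi.add_apply] <;> split_ifs <;>
    first | omega | norm_num

lemma exists_species_linking_succ (n i : ℕ) (hi : i + 1 < 2*n+2) :
    ∃ s, (producingReaction n s : ℕ) = i ∧ (consumingReaction n s : ℕ) = i + 1 := by
  -- the paper's species `2i+5` on the phosphorylation chain, `4` between the two chains,
  -- and `4n+6-2i` on the dephosphorylation chain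
  refine ⟨⟨if i < n then 2*i+4 else if i = n then 3 else 4*n+5 - 2*i, by split_ifs <;> omega⟩, ?_⟩
  simp only [producingReaction, consumingReaction, Fin.val_mk]
  split_ifs <;> grind

lemma incidenceGraph_producing_consuming_connected (n : ℕ) :
    (incidenceGraph (producingReaction n) (consumingReaction n)).Connected := by
  refine (SimpleGraph.pathGraph_connected (2*n+1)).mono fun i j hij => ?_
  rw [SimpleGraph.pathGraph_adj] at hij
  refine (SimpleGraph.fromRel_adj _ _ _).mpr ⟨fun h => by subst h; omega, ?_⟩
  rcases hij with h | h
  · obtain ⟨s, hp, hq⟩ := exists_species_linking_succ n i (by omega)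
    exact Or.inl ⟨s, Fin.ext hp, Fin.ext (hq.trans h)⟩
  · obtain ⟨s, hp, hq⟩ := exists_species_linking_succ n j (by omega)
    exact Or.inr ⟨s, Fin.ext hp, Fin.ext (hq.trans h)⟩

/-- The stoichiometric matrix `Γ` of the processive `n`-site phosphorylation network
has rank `2n+1`. -/
theorem gamma_rank (n : ℕ) (hn : 1 ≤ n) : (Gamma n).rank = 2*n+1 := by
  rw [rank_eq_card_sub_one_of_row_eq (Gamma_row_eq hn) (incidenceGraph_producing_consuming_connected n),
    Fintype.card_fin]
  rfl

end
end

section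
/- The rows of the conservation matrix 𝒜 are linearly independent, they satisfy 𝒜·Γ = 0, and the kernel of the transpose Γᵗ equals the linear span of the three rows of 𝒜 (so the rows of 𝒜 form a basis of the orthogonal complement of the column space of Γ). -/
/-!
Read `Γᵀ x = 0` column by column. The first `n` columns chain the odd coordinates
`x₅, x₇, …, x_{2n+3}` to `x₁ + x₃`, the last `n` columns chain the even coordinates
`x₆, x₈, …, x_{2n+4}` to `x₂ + x₃`, and column `n + 1` then forces `x₄ = x₃`. Hence every `x` in
`ker Γᵀ` equals `x₁ 𝒜₁ + x₂ 𝒜₂ + x₃ 𝒜₃`. Conversely every row of `𝒜` satisfies all column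
equations, which gives both `𝒜 Γ = 0` and the reverse inclusion; independence of the rows is read
off the coordinates `1, 2, 3`.
-/


open Matrix Finset

noncomputable section

/-- The conservation matrix `𝒜` of the processive `n`-site network: row 1 has ones in
columns 1, 5, 7, …, 2n+3; row 2 has ones in columns 2, 6, 8, …, 2n+4; row 3 has ones in
columns 3, 4, …, 2n+4 (columns indexed 1-based). -/
def Amat (n : ℕ) : Matrix (Fin 3) (Fin (2*n+4)) ℝ :=
  Matrix.of fun r c =>
    let m := (c : ℕ) + 1
    if (r : ℕ) = 0 then (if m = 1 ∨ (m % 2 = 1 ∧ 5 ≤ m) then (1:ℝ) else 0)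
    else if (r : ℕ) = 1 then (if m = 2 ∨ (m % 2 = 0 ∧ 6 ≤ m) then 1 else 0)
    else (if 3 ≤ m then 1 else 0)


section

variable {n : ℕ}

lemma X_succ (x : Fin (2*n+4) → ℝ) (j : Fin (2*n+4)) : X n x ((j : ℕ) + 1) = x j := by
  simp [X]

lemma dotProduct_E (x : Fin (2*n+4) → ℝ) {m : ℕ} (hm : m ≠ 0) : x ⬝ᵥ E n m = X n x m := by
  unfold X
  split_ifs with h
  · rw [dotProduct, Finset.sum_eq_single ⟨m - 1, h⟩]
    · simp [E, Nat.sub_add_cancel (Nat.one_le_iff_ne_zero.2 hm)]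
    · intro j _ hj
      simp only [E, mul_ite, mul_one, mul_zero, ite_eq_right_iff]
      exact fun hjm => absurd (Fin.ext (by simp; omega)) hj
    · simp
  · exact Finset.sum_eq_zero fun j _ => by simp [E]; omega

section columns

variable (x : Fin (2*n+4) → ℝ) {c : Fin (2*n+2)}

lemma vecMul_Gamma_apply_of_col_eq {v : Fin (2*n+4) → ℝ} (hv : ∀ r, Gamma n r c = v r) :
    (x ᵥ* Gamma n) c = x ⬝ᵥ v := by
  simp only [vecMul, hv]

lemma vecMul_Gamma_apply_of_eq_zero (hc : (c : ℕ) = 0) :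
    (x ᵥ* Gamma n) c = X n x 5 - X n x 1 - X n x 3 := by
  rw [vecMul_Gamma_apply_of_col_eq x (v := E n 5 - E n 1 - E n 3) fun r => by
    simp (disch := omega) only [Gamma, of_apply, if_pos]]
  simp [dotProduct_sub, dotProduct_E]

lemma vecMul_Gamma_apply_of_lt {i : ℕ} (hi0 : i ≠ 0) (hin : i < n) (hc : (c : ℕ) = i) :
    (x ᵥ* Gamma n) c = X n x (2 * i + 5) - X n x (2 * i + 3) := by
  rw [vecMul_Gamma_apply_of_col_eq x (v := E n (2 * i + 5) - E n (2 * i + 3)) fun r => by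
    simp (disch := omega) only [Gamma, of_apply, if_pos, if_neg, Nat.add_sub_cancel, hc]]
  simp [dotProduct_sub, dotProduct_E]

lemma vecMul_Gamma_apply_of_eq (hn : n ≠ 0) (hc : (c : ℕ) = n) :
    (x ᵥ* Gamma n) c = X n x 1 + X n x 4 - X n x (2 * n + 3) := by
  rw [vecMul_Gamma_apply_of_col_eq x (v := E n 1 + E n 4 - E n (2 * n + 3)) fun r => by
    simp (disch := omega) only [Gamma, of_apply, if_pos, if_neg]]
  simp [dotProduct_sub, dotProduct_add, dotProduct_E]

lemma vecMul_Gamma_apply_of_eq_add_one (hc : (c : ℕ) = n + 1) :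
    (x ᵥ* Gamma n) c = X n x (2 * n + 4) - X n x 2 - X n x 4 := by
  rw [vecMul_Gamma_apply_of_col_eq x (v := E n (2 * n + 4) - E n 2 - E n 4) fun r => by
    simp (disch := omega) only [Gamma, of_apply, if_pos, if_neg]]
  simp [dotProduct_sub, dotProduct_E]

lemma vecMul_Gamma_apply_of_add_eq {j : ℕ} (hj0 : j ≠ 0) (hjn : j < n)
    (hc : (c : ℕ) + j = 2 * n + 1) :
    (x ᵥ* Gamma n) c = X n x (2 * j + 4) - X n x (2 * j + 6) := by
  rw [vecMul_Gamma_apply_of_col_eq x (v := E n (2 * j + 4) - E n (2 * j + 6)) fun r => by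
    simp (disch := omega) only [Gamma, of_apply, if_pos, if_neg]
    rw [show 2 * n + 4 - 2 * (c + 1 - (n + 2)) = 2 * j + 4 by omega,
      show 2 * n + 6 - 2 * (c + 1 - (n + 2)) = 2 * j + 6 by omega]]
  simp [dotProduct_sub, dotProduct_E]

lemma vecMul_Gamma_apply_of_eq_last (hn : n ≠ 0) (hc : (c : ℕ) = 2 * n + 1) :
    (x ᵥ* Gamma n) c = X n x 2 + X n x 3 - X n x 6 := by
  rw [vecMul_Gamma_apply_of_col_eq x (v := E n 2 + E n 3 - E n 6) fun r => by
    simp (disch := omega) only [Gamma, of_apply, if_neg]]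
  simp [dotProduct_sub, dotProduct_add, dotProduct_E]

end columns

lemma X_Amat (r : Fin 3) {m : ℕ} (hm0 : m ≠ 0) (hm : m ≤ 2 * n + 4) :
    X n (Amat n r) m =
      if (r : ℕ) = 0 then (if m = 1 ∨ (m % 2 = 1 ∧ 5 ≤ m) then 1 else 0)
      else if (r : ℕ) = 1 then (if m = 2 ∨ (m % 2 = 0 ∧ 6 ≤ m) then 1 else 0)
      else (if 3 ≤ m then 1 else 0) := by
  rw [X, dif_pos (by omega)]
  simp only [Amat, of_apply, Nat.sub_add_cancel (Nat.one_le_iff_ne_zero.2 hm0)]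

lemma Amat_vecMul_Gamma (hn : n ≠ 0) (r : Fin 3) : Amat n r ᵥ* Gamma n = 0 := by
  ext ⟨c, hc⟩
  rw [Pi.zero_apply]
  have hcases : c = 0 ∨ (c ≠ 0 ∧ c < n) ∨ c = n ∨ c = n + 1 ∨ (n + 1 < c ∧ c ≤ 2 * n) ∨
      c = 2 * n + 1 := by omega
  rcases hcases with rfl | ⟨hc0, hcn⟩ | rfl | rfl | ⟨hnc, hc2n⟩ | rfl <;>
  [rw [vecMul_Gamma_apply_of_eq_zero _ rfl];
   rw [vecMul_Gamma_apply_of_lt _ hc0 hcn rfl];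
   rw [vecMul_Gamma_apply_of_eq _ hn rfl];
   rw [vecMul_Gamma_apply_of_eq_add_one _ rfl];
   rw [vecMul_Gamma_apply_of_add_eq _ (j := 2 * n + 1 - c) (by omega) (by omega) (by simp; omega)];
   rw [vecMul_Gamma_apply_of_eq_last _ hn rfl]] <;>
  simp (disch := omega) only [X_Amat] <;> split_ifs <;> grind

section kernel

variable {x : Fin (2*n+4) → ℝ}

lemma X_odd_of_vecMul_Gamma_eq_zero (hx : x ᵥ* Gamma n = 0) {i : ℕ} (hi : 1 ≤ i)
    (hin : i ≤ n) : X n x (2 * i + 3) = X n x 1 + X n x 3 := by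
  simp only [funext_iff, Pi.zero_apply] at hx
  induction i, hi using Nat.le_induction with
  | base => linarith [hx ⟨0, by omega⟩, vecMul_Gamma_apply_of_eq_zero x (c := ⟨0, by omega⟩) rfl]
  | succ i hi ih =>
    rw [show 2 * (i + 1) + 3 = 2 * i + 5 by ring]
    linarith [hx ⟨i, by omega⟩, ih (by omega),
      vecMul_Gamma_apply_of_lt x (c := ⟨i, by omega⟩) (i := i) (by omega) (by omega) rfl]

lemma X_even_of_vecMul_Gamma_eq_zero (hn : n ≠ 0) (hx : x ᵥ* Gamma n = 0) {i : ℕ} (hi : 1 ≤ i)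
    (hin : i ≤ n) : X n x (2 * i + 4) = X n x 2 + X n x 3 := by
  simp only [funext_iff, Pi.zero_apply] at hx
  induction i, hi using Nat.le_induction with
  | base =>
    linarith [hx ⟨2 * n + 1, by omega⟩,
      vecMul_Gamma_apply_of_eq_last x (c := ⟨2 * n + 1, by omega⟩) hn rfl]
  | succ i hi ih =>
    rw [show 2 * (i + 1) + 4 = 2 * i + 6 by ring]
    linarith [hx ⟨2 * n + 1 - i, by omega⟩, ih (by omega),
      vecMul_Gamma_apply_of_add_eq x (c := ⟨2 * n + 1 - i, by omega⟩) (j := i) (by omega) (by omega)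
        (by simp; omega)]

lemma X_four_of_vecMul_Gamma_eq_zero (hn : n ≠ 0) (hx : x ᵥ* Gamma n = 0) :
    X n x 4 = X n x 3 := by
  have hcol := vecMul_Gamma_apply_of_eq x (c := ⟨n, by omega⟩) hn rfl
  rw [hx, Pi.zero_apply] at hcol
  linarith [X_odd_of_vecMul_Gamma_eq_zero hx (i := n) (by omega) le_rfl]

lemma eq_of_vecMul_Gamma_eq_zero (hn : n ≠ 0) (hx : x ᵥ* Gamma n = 0) :
    x = X n x 1 • Amat n 0 + X n x 2 • Amat n 1 + X n x 3 • Amat n 2 := by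
  ext ⟨j, hj⟩
  rw [← X_succ x ⟨j, hj⟩]
  simp only [Pi.add_apply, Pi.smul_apply, smul_eq_mul, Amat, of_apply]
  obtain rfl | rfl | rfl | rfl | ⟨hj4, hjeven⟩ | ⟨hj5, hjodd⟩ : j = 0 ∨ j = 1 ∨ j = 2 ∨ j = 3 ∨
      (4 ≤ j ∧ j % 2 = 0) ∨ (5 ≤ j ∧ j % 2 = 1) := by omega
  · norm_num
  · norm_num
  · norm_num
  · norm_num [X_four_of_vecMul_Gamma_eq_zero hn hx]
  · obtain ⟨i, rfl⟩ : ∃ i, j = 2 * i + 2 := ⟨j / 2 - 1, by omega⟩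
    simp (disch := omega) only [if_pos, if_neg]
    rw [X_odd_of_vecMul_Gamma_eq_zero hx (by omega) (by omega)]
    ring
  · obtain ⟨i, rfl⟩ : ∃ i, j = 2 * i + 3 := ⟨j / 2 - 1, by omega⟩
    simp (disch := omega) only [if_pos, if_neg]
    rw [X_even_of_vecMul_Gamma_eq_zero hn hx (by omega) (by omega)]
    ring

end kernel

lemma linearIndependent_Amat_rows : LinearIndependent ℝ (fun r : Fin 3 => Amat n r) := by
  refine Fintype.linearIndependent_iff.2 fun g hg r => ?_
  fin_cases r
  · simpa [Fin.sum_univ_three, Amat] using congrFun hg ⟨0, by omega⟩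
  · simpa [Fin.sum_univ_three, Amat] using congrFun hg ⟨1, by omega⟩
  · simpa [Fin.sum_univ_three, Amat] using congrFun hg ⟨2, by omega⟩

end

/-- The rows of the conservation matrix `𝒜` are linearly independent, `𝒜 ⬝ Γ = 0`, and the
kernel of `Γᵗ` equals the span of the three rows of `𝒜`. -/
theorem conservation_basis (n : ℕ) (hn : 1 ≤ n) :
    LinearIndependent ℝ (fun r : Fin 3 => (Amat n r : Fin (2*n+4) → ℝ)) ∧
    Amat n * Gamma n = 0 ∧
    LinearMap.ker (Matrix.mulVecLin (Gamma n)ᵀ) =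
      Submodule.span ℝ (Set.range fun r : Fin 3 => (Amat n r : Fin (2*n+4) → ℝ)) := by
  have hn0 : n ≠ 0 := Nat.one_le_iff_ne_zero.1 hn
  have hker (x : Fin (2*n+4) → ℝ) :
      x ∈ LinearMap.ker (Matrix.mulVecLin (Gamma n)ᵀ) ↔ x ᵥ* Gamma n = 0 := by
    rw [LinearMap.mem_ker, mulVecLin_apply, mulVec_transpose]
  refine ⟨linearIndependent_Amat_rows, ?_, le_antisymm ?_ ?_⟩
  · funext r
    rw [mul_apply_eq_vecMul, Amat_vecMul_Gamma hn0]
    rfl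
  · intro x hx
    rw [Submodule.mem_span_range_iff_exists_fun]
    refine ⟨![X n x 1, X n x 2, X n x 3], ?_⟩
    rw [Fin.sum_univ_three]
    exact (eq_of_vecMul_Gamma_eq_zero hn0 ((hker x).1 hx)).symm
  · exact Submodule.span_le.2 (Set.range_subset_iff.2 fun r => (hker _).2 (Amat_vecMul_Gamma hn0 r))

end
end

section
/- The matrix Ỹ of the translated processive network has full rank 2n+2; equivalently, the kernel of its transpose Ỹᵗ is {0}. -/
open Matrix Finset

noncomputable section

/-- The matrix `Ỹ` of the translated processive network (rows indexed 1-based). -/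
def Ytilde (n : ℕ) : Matrix (Fin (2*n+2)) (Fin (2*n+4)) ℝ :=
  Matrix.of fun r0 c =>
    (let r := (r0 : ℕ) + 1
     if r = 1 then E n 1 + E n 2 + E n 3
     else if r ≤ n+1 then E n 2 + E n (2*(r-2)+5)
     else if r = n+2 then E n 1 + E n 2 + E n 4
     else E n 1 + E n (2*n+4-2*(r-(n+3)))) c

/-! Each of the columns `3, …, 2n+4` of `Ỹ` has a single nonzero entry, a `1`, and distinct
such columns meet distinct rows: the odd columns `3, 5, …, 2n+3` meet rows `1, …, n+1`, and the
even columns `4, 2n+4, 2n+2, …, 6` meet rows `n+2, …, 2n+2`. So `Ỹ` contains the identity matrix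
of size `2n+2` as a column submatrix, which forces full row rank and an injective transpose. -/

namespace Matrix

variable {m n R : Type*} [Fintype m] [DecidableEq m] [CommSemiring R]

theorem rank_eq_card_height_of_submatrix_eq_one [Fintype n] [StrongRankCondition R]
    {A : Matrix m n R} {σ : m → n} (hσ : A.submatrix id σ = 1) : A.rank = Fintype.card m :=
  le_antisymm A.rank_le_card_height (by simpa [hσ] using A.rank_submatrix_le id σ)

theorem ker_mulVecLin_transpose_eq_bot_of_submatrix_eq_one {A : Matrix m n R} {σ : m → n}
    (hσ : A.submatrix id σ = 1) : LinearMap.ker Aᵀ.mulVecLin = ⊥ := by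
  refine LinearMap.ker_eq_bot'.2 fun v hv => ?_
  have hT : Aᵀ.submatrix σ id = 1 := by rw [← transpose_submatrix, hσ, transpose_one]
  calc v = Aᵀ.submatrix σ id *ᵥ v := by rw [hT, one_mulVec]
    _ = (Aᵀ *ᵥ v) ∘ σ := Aᵀ.submatrix_mulVec_equiv v σ (Equiv.refl m)
    _ = 0 := by rw [← mulVecLin_apply, hv]; rfl

end Matrix

/-- Unlike `E` and the row labels in `Ytilde`, rows and columns are indexed from `0` here. -/
def unitColumn (n : ℕ) (r : Fin (2*n+2)) : Fin (2*n+4) :=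
  ⟨if (r : ℕ) ≤ n then 2*r+2 else if (r : ℕ) = n+1 then 3 else 4*n+7-2*r, by split_ifs <;> omega⟩

theorem Ytilde_submatrix_unitColumn (n : ℕ) : (Ytilde n).submatrix id (unitColumn n) = 1 := by
  ext ⟨i, hi⟩ ⟨j, hj⟩
  simp only [Ytilde, unitColumn, submatrix_apply, id, of_apply, one_apply, Fin.mk.injEq]
  split_ifs <;> simp only [Pi.add_apply, E] <;> split_ifs <;> first | omega | norm_num

theorem Ytilde_full_rank_general (n : ℕ) :
    (Ytilde n).rank = 2*n+2 ∧ LinearMap.ker (Matrix.mulVecLin (Ytilde n)ᵀ) = ⊥ := by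
  have h := Ytilde_submatrix_unitColumn n
  exact ⟨by simpa using rank_eq_card_height_of_submatrix_eq_one h,
    ker_mulVecLin_transpose_eq_bot_of_submatrix_eq_one h⟩

/-- The matrix `Ỹ` of the translated processive network has full rank `2n+2`;
equivalently, the kernel of its transpose `Ỹᵗ` is trivial. -/
theorem Ytilde_full_rank (n : ℕ) (hn : 1 ≤ n) :
    (Ytilde n).rank = 2*n+2 ∧ LinearMap.ker (Matrix.mulVecLin (Ytilde n)ᵀ) = ⊥ :=
  Ytilde_full_rank_general n

end
end

section
/- For every x ∈ ℝ^{2n+4}, the polynomial identity Γ·R(x) = Ỹᵗ·Ã_κᵗ·Ψ(x) holds; that is, the mass-action system of the processive n-site network coincides with the generalized mass-action system defined by its weakly reversible translation. -/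
open Matrix Finset

noncomputable section

/-- The label of the edge `a → b` (nodes 1-based in `{1, …, 2n+2}`) in the labeled digraph
underlying the translated processive network; `0` if there is no such edge. -/
def lab (n : ℕ) (k l : ℕ → ℝ) (a b : ℕ) : ℝ :=
  if 1 ≤ a ∧ a ≤ n ∧ b = a+1 then k (2*a-1)
  else if 1 ≤ b ∧ b ≤ n ∧ a = b+1 then k (2*b)
  else if a = n+1 ∧ b = n+2 then k (2*n+1)
  else if n+2 ≤ a ∧ a ≤ 2*n+1 ∧ b = a+1 then l (2*(n+1-(a-(n+1)))+1)
  else if n+3 ≤ a ∧ a ≤ 2*n+2 ∧ b+1 = a then l (2*(n+1-(a-(n+2))))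
  else if a = 2*n+2 ∧ b = 1 then l 1
  else 0

/-- The matrix `Ã_κᵗ` of the translated processive network: for `j ≠ i` the `(j,i)` entry
is the label of the edge `i → j` (or `0`), and the `(i,i)` entry is minus the sum of the
labels of all edges leaving node `i`. -/
def Atilde (n : ℕ) (k l : ℕ → ℝ) : Matrix (Fin (2*n+2)) (Fin (2*n+2)) ℝ :=
  Matrix.of fun j i =>
    if j = i then -(∑ b ∈ Finset.range (2*n+3), lab n k l ((i : ℕ)+1) b)
    else lab n k l ((i : ℕ)+1) ((j : ℕ)+1)

/-- The monomial map `Ψ : ℝ^(2n+4) → ℝ^(2n+2)` of the translated processive network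
(coordinates indexed 1-based). -/
def Psi (n : ℕ) (x : Fin (2*n+4) → ℝ) : Fin (2*n+2) → ℝ := fun a0 =>
  let a := (a0 : ℕ) + 1
  if a = 1 then X n x 1 * X n x 3
  else if a ≤ n+1 then X n x (2*a+1)
  else if a = n+2 then X n x 2 * X n x 4
  else X n x (2*n+6-2*(a-(n+2)))

/-! The translated network is the cycle `1 → 2 → ⋯ → 2n+2 → 1`, reversible on every edge except
`n+1 → n+2` and `2n+2 → 1`. For any weighted digraph, `Ỹᵗ Ã_κᵗ Ψ` is the sum over edges `i → j` of
`κ_{ij} Ψ_i (ỹ_j - ỹ_i)`; on a cycle of length at least three, pairing each edge `c → c+1` with its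
reverse turns this into `∑_c (κ_{c,c+1} Ψ_c - κ_{c+1,c} Ψ_{c+1}) (ỹ_{c+1} - ỹ_c)`. Coordinatewise,
the net flux of the `c`-th edge is `R_c` and `ỹ_{c+1} - ỹ_c` is the `c`-th column of `Γ`. -/

section WeightedLaplacian

variable {ι S R : Type*} [Fintype ι] [DecidableEq ι] [CommRing R]

/-- The matrix `Ã_κᵗ` of the digraph in which `κ i j` is the weight of the edge `i → j`. -/
def weightedLaplacian (κ : Matrix ι ι R) : Matrix ι ι R :=
  κᵀ - diagonal fun i => ∑ j, κ i j

theorem weightedLaplacian_mulVec_apply (κ : Matrix ι ι R) (ψ : ι → R) (j : ι) :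
    (weightedLaplacian κ *ᵥ ψ) j = ∑ i, κ i j * ψ i - (∑ i, κ j i) * ψ j := by
  rw [weightedLaplacian, sub_mulVec, Pi.sub_apply, mulVec_diagonal]
  rfl

theorem transpose_mulVec_weightedLaplacian_mulVec (κ : Matrix ι ι R) (Y : Matrix ι S R)
    (ψ : ι → R) :
    Yᵀ *ᵥ (weightedLaplacian κ *ᵥ ψ) = ∑ i, ∑ j, (κ i j * ψ i) • (Y j - Y i) := by
  ext r
  simp only [mulVec_transpose, vecMul, dotProduct, weightedLaplacian_mulVec_apply,
    Finset.sum_apply, Pi.smul_apply, Pi.sub_apply, smul_eq_mul, sub_mul, mul_sub,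
    Finset.sum_sub_distrib, Finset.sum_mul]
  rw [Finset.sum_comm]

end WeightedLaplacian

theorem Equiv.Perm.sum_sum_eq_sum_add_of_cycle {ι M : Type*} [Fintype ι] [AddCommMonoid M]
    (σ : Equiv.Perm ι) (hσ : ∀ i, σ (σ i) ≠ i) (g : ι → ι → M)
    (hg : ∀ i j, j ≠ σ i → i ≠ σ j → g i j = 0) :
    ∑ i, ∑ j, g i j = ∑ i, (g i (σ i) + g (σ i) i) := by
  have hrow (i : ι) : ∑ j, g i j = g i (σ i) + g i (σ.symm i) := by
    refine Fintype.sum_eq_add _ _ (fun h => hσ i ?_) fun j hj => hg i j hj.1 ?_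
    · simpa using congrArg σ h
    · simpa [Equiv.eq_symm_apply, eq_comm] using hj.2
  simp only [hrow, Finset.sum_add_distrib]
  congr 1
  exact (Equiv.sum_comp σ _).symm.trans (by simp)

lemma val_finRotate_two_mul_add_two {n : ℕ} (i : Fin (2*n+2)) :
    (finRotate (2*n+2) i : ℕ) = if (i : ℕ) = 2*n+1 then 0 else (i : ℕ) + 1 := by
  rw [coe_finRotate (n := 2*n+1) i]
  simp only [Fin.ext_iff, Fin.val_last]

lemma finRotate_finRotate_ne {n : ℕ} (hn : 1 ≤ n) (i : Fin (2*n+2)) :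
    finRotate _ (finRotate _ i) ≠ i := by
  rw [Ne, Fin.ext_iff, val_finRotate_two_mul_add_two, val_finRotate_two_mul_add_two]
  split_ifs <;> omega

lemma lab_self (n : ℕ) (k l : ℕ → ℝ) (a : ℕ) : lab n k l a a = 0 := by
  simp (disch := omega) only [lab, if_neg]

lemma lab_zero_right (n : ℕ) (k l : ℕ → ℝ) (a : ℕ) : lab n k l a 0 = 0 := by
  simp (disch := omega) only [lab, if_neg]

def edgeLabel (n : ℕ) (k l : ℕ → ℝ) : Matrix (Fin (2*n+2)) (Fin (2*n+2)) ℝ :=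
  Matrix.of fun i j => lab n k l (i + 1) (j + 1)

lemma edgeLabel_eq_zero {n : ℕ} {k l : ℕ → ℝ} {i j : Fin (2*n+2)} (hj : j ≠ finRotate _ i)
    (hi : i ≠ finRotate _ j) : edgeLabel n k l i j = 0 := by
  rw [Ne, Fin.ext_iff, val_finRotate_two_mul_add_two] at hi hj
  split_ifs at hi hj <;> simp (disch := omega) only [edgeLabel, Matrix.of_apply, lab, if_neg]

theorem Atilde_eq_weightedLaplacian (n : ℕ) (k l : ℕ → ℝ) :
    Atilde n k l = weightedLaplacian (edgeLabel n k l) := by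
  ext j i
  rw [weightedLaplacian, Matrix.sub_apply, transpose_apply, diagonal_apply]
  simp only [Atilde, edgeLabel, Matrix.of_apply]
  split_ifs with h
  · rw [h, lab_self, zero_sub, Finset.sum_range_succ', lab_zero_right, add_zero,
      Fin.sum_univ_eq_sum_range (fun b => lab n k l (i + 1) (b + 1))]
  · rw [sub_zero]

theorem Rvec_eq_netFlux {n : ℕ} (hn : 1 ≤ n) (k l : ℕ → ℝ) (x : Fin (2*n+4) → ℝ)
    (c : Fin (2*n+2)) :
    Rvec n k l x c = edgeLabel n k l c (finRotate _ c) * Psi n x c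
      - edgeLabel n k l (finRotate _ c) c * Psi n x (finRotate _ c) := by
  simp only [Rvec, Psi, edgeLabel, Matrix.of_apply, val_finRotate_two_mul_add_two, lab]
  have := c.isLt
  generalize (c : ℕ) = m at *
  -- the regions of the cycle on which every `if` in the definitions has a fixed branch
  rcases (show m = 0 ∨ (1 ≤ m ∧ m + 1 ≤ n) ∨ m = n ∨ m = n + 1 ∨ (n + 2 ≤ m ∧ m ≤ 2*n) ∨
      m = 2*n+1 by omega) with rfl | ⟨h₁, h₂⟩ | rfl | rfl | ⟨h₁, h₂⟩ | rfl <;>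
    simp (disch := omega) only [if_pos, if_neg, if_true] <;> grind

theorem Gamma_apply_eq_sub {n : ℕ} (hn : 1 ≤ n) (r : Fin (2*n+4)) (c : Fin (2*n+2)) :
    Gamma n r c = Ytilde n (finRotate _ c) r - Ytilde n c r := by
  simp only [Gamma, Ytilde, Matrix.of_apply, val_finRotate_two_mul_add_two]
  have := c.isLt
  generalize (c : ℕ) = m at *
  rcases (show m = 0 ∨ (1 ≤ m ∧ m + 1 ≤ n) ∨ m = n ∨ m = n + 1 ∨ (n + 2 ≤ m ∧ m ≤ 2*n) ∨
      m = 2*n+1 by omega) with rfl | ⟨h₁, h₂⟩ | rfl | rfl | ⟨h₁, h₂⟩ | rfl <;>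
    simp (disch := omega) only [if_pos, if_neg, if_true, Pi.add_apply, Pi.sub_apply] <;> grind

theorem Gamma_mulVec {n : ℕ} (hn : 1 ≤ n) (v : Fin (2*n+2) → ℝ) :
    Gamma n *ᵥ v = ∑ c, v c • (Ytilde n (finRotate _ c) - Ytilde n c) := by
  ext r
  simp only [mulVec, dotProduct, Gamma_apply_eq_sub hn, Finset.sum_apply, Pi.smul_apply,
    Pi.sub_apply, smul_eq_mul, mul_comm]

theorem translation_identity_general (n : ℕ) (hn : 1 ≤ n) (k l : ℕ → ℝ) :
    ∀ x : Fin (2*n+4) → ℝ,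
      (Gamma n).mulVec (Rvec n k l x)
        = (Ytilde n)ᵀ.mulVec ((Atilde n k l).mulVec (Psi n x)) := by
  intro x
  rw [Gamma_mulVec hn, Atilde_eq_weightedLaplacian, transpose_mulVec_weightedLaplacian_mulVec,
    (finRotate _).sum_sum_eq_sum_add_of_cycle (finRotate_finRotate_ne hn) _
      fun i j hj hi => by rw [edgeLabel_eq_zero hj hi, zero_mul, zero_smul]]
  refine Finset.sum_congr rfl fun c _ => ?_
  rw [Rvec_eq_netFlux hn, sub_smul, sub_eq_add_neg, ← smul_neg, neg_sub]

/-- For every `x`, the polynomial identity `Γ·R(x) = Ỹᵗ·Ã_κᵗ·Ψ(x)` holds: the mass-action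
system of the processive `n`-site network coincides with the generalized mass-action
system defined by its weakly reversible translation. -/
theorem translation_identity (n : ℕ) (hn : 1 ≤ n) (k l : ℕ → ℝ)
    (hk : ∀ i, 1 ≤ i → i ≤ 2*n+1 → 0 < k i)
    (hl : ∀ i, 1 ≤ i → i ≤ 2*n+1 → 0 < l i) :
    ∀ x : Fin (2*n+4) → ℝ,
      (Gamma n).mulVec (Rvec n k l x)
        = (Ytilde n)ᵀ.mulVec ((Atilde n k l).mulVec (Psi n x)) :=
  translation_identity_general n hn k l

end
end

section
/- The (2n+2)×(2n+2) matrix Ã_κᵗ has rank 2n+1, and its kernel is spanned by a vector all of whose coordinates are strictly positive. -/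
/-!
`Ã_κᵗ` is the Laplacian of a cycle `1 → 2 → ⋯ → N → 1` (`N = 2n+2`, edge weights `w`) that
also carries backward edges `a + 1 → a`, but no reverse of the closing edge. For such a Laplacian
the `a`-th entry of `Ã x` is `J_{a-1} - J_a`, where `J_a` is the net flux of `x` from node `a` to
node `a + 1`, and the closing edge contributes `J_0 = J_N = w(N, 1) x_N`. So `Ã x = 0` exactly
when all fluxes agree. Prescribing the common flux `1` determines `x` by back-substitution from
node `N` down to node `1`, each step dividing by a positive forward weight: this gives a positive
kernel vector, and a kernel vector vanishing at node `N` vanishes everywhere, so the kernel is a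
line.
-/

open Matrix Finset

noncomputable section

theorem Matrix.rank_eq_card_sub_one_of_ker_eq_span {m n K : Type*} [Fintype n] [Field K]
    {A : Matrix m n K} {v : n → K} (hv : v ≠ 0)
    (h : LinearMap.ker (mulVecLin A) = Submodule.span K {v}) :
    A.rank = Fintype.card n - 1 := by
  have := LinearMap.finrank_range_add_finrank_ker (mulVecLin A)
  rw [h, finrank_span_singleton hv, Module.finrank_fintype_fun_eq_card] at this
  rw [Matrix.rank]
  omega

section DigraphLaplacian

variable {N : ℕ} {w : ℕ → ℕ → ℝ}

def digraphLaplacian (N : ℕ) (w : ℕ → ℕ → ℝ) : Matrix (Fin N) (Fin N) ℝ :=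
  Matrix.of fun j i =>
    if j = i then -(∑ b ∈ range (N + 1), w ((i : ℕ) + 1) b) else w ((i : ℕ) + 1) ((j : ℕ) + 1)

/-- `w` lives on the cycle `1 → 2 → ⋯ → N → 1` together with the backward edges `a + 1 → a`
(`1 ≤ a < N`); the closing edge `N → 1` has no reverse. `3 ≤ N` keeps the closing edge apart from
the edges between `1` and `2`. -/
structure IsCycleSupported (N : ℕ) (w : ℕ → ℕ → ℝ) : Prop where
  three_le : 3 ≤ N
  eq_zero {a b : ℕ} :
    ¬((1 ≤ a ∧ a < N ∧ b = a + 1) ∨ (1 ≤ b ∧ b < N ∧ a = b + 1) ∨ (a = N ∧ b = 1)) → w a b = 0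

/-- The coordinate of `x` at the (1-based) node `m`; junk outside `1, …, N`. -/
def nodeVal (x : Fin N → ℝ) (m : ℕ) : ℝ :=
  if h : m - 1 < N then x ⟨m - 1, h⟩ else 0

@[simp]
theorem nodeVal_succ (x : Fin N → ℝ) (i : Fin N) : nodeVal x ((i : ℕ) + 1) = x i := by
  simp [nodeVal]

theorem nodeVal_sub_smul (x y : Fin N → ℝ) (c : ℝ) (m : ℕ) :
    nodeVal (x - c • y) m = nodeVal x m - c * nodeVal y m := by
  unfold nodeVal
  split_ifs <;> simp

/-- The net flow of `x` across the cut between nodes `m` and `m + 1`; the cuts `0` and `N` are both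
the closing edge `N → 1`. -/
def flux (N : ℕ) (w : ℕ → ℕ → ℝ) (x : Fin N → ℝ) (m : ℕ) : ℝ :=
  if m = 0 ∨ m = N then w N 1 * nodeVal x N
  else w m (m + 1) * nodeVal x m - w (m + 1) m * nodeVal x (m + 1)

theorem digraphLaplacian_mulVec (hw : IsCycleSupported N w) (x : Fin N → ℝ) (j : Fin N) :
    (digraphLaplacian N w *ᵥ x) j = ∑ b ∈ range (N + 1),
      (w b (j + 1) * nodeVal x b - w (j + 1) b * nodeVal x (j + 1)) := by
  have hN := hw.three_le
  have hentry : ∀ i, digraphLaplacian N w j i * x i = w (i + 1) (j + 1) * x i -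
      if i = j then (∑ b ∈ range (N + 1), w (j + 1) b) * x j else 0 := by
    intro i
    by_cases hij : i = j
    · subst hij
      simp [digraphLaplacian, hw.eq_zero (a := i + 1) (b := i + 1) (by omega)]
    · simp [digraphLaplacian, Ne.symm hij, hij]
  have hin : ∑ i : Fin N, w (i + 1) (j + 1) * x i =
      ∑ b ∈ range (N + 1), w b (j + 1) * nodeVal x b := by
    rw [sum_range_succ', hw.eq_zero (by omega), zero_mul, add_zero,
      ← Fin.sum_univ_eq_sum_range (fun i => w (i + 1) (j + 1) * nodeVal x (i + 1))]
    simp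
  rw [mulVec, dotProduct, sum_congr rfl fun i _ => hentry i, sum_sub_distrib, hin,
    sum_ite_eq' univ j, if_pos (mem_univ j), sum_sub_distrib, ← sum_mul, nodeVal_succ]

theorem digraphLaplacian_mulVec_eq_flux_sub (hw : IsCycleSupported N w)
    (x : Fin N → ℝ) (j : Fin N) :
    (digraphLaplacian N w *ᵥ x) j = flux N w x j - flux N w x (j + 1) := by
  have hN := hw.three_le
  have hj := j.isLt
  have hoff : ∀ c : ℕ, (c ≠ j ∨ c = 0) → c ≠ j + 2 → ¬(c = N ∧ (j : ℕ) = 0) →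
      ¬((j : ℕ) + 1 = N ∧ c = 1) →
      w c (j + 1) * nodeVal x c - w (j + 1) c * nodeVal x (j + 1) = 0 := by
    intro c h1 h2 h3 h4
    rw [hw.eq_zero (a := c) (by omega), hw.eq_zero (b := c) (by omega)]
    ring
  have hmem : ∀ c, c < N + 1 → c ∈ range (N + 1) := fun c => mem_range.2
  rw [digraphLaplacian_mulVec hw]
  obtain h0 | hmid | hlast : (j : ℕ) = 0 ∨ (0 < (j : ℕ) ∧ (j : ℕ) + 1 < N) ∨ (j : ℕ) + 1 = N := by
    omega
  · rw [sum_eq_add 2 N (by omega)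
      (fun c hc hne => hoff c (by omega) (by omega) (by omega) (by omega))
      (absurd (hmem 2 (by omega))) (absurd (hmem N (by omega))), h0,
      hw.eq_zero (a := 1) (b := N) (by omega)]
    simp [flux, show (1 : ℕ) ≠ N by omega]
    ring
  · rw [sum_eq_add (j : ℕ) (j + 2) (by omega)
      (fun c hc hne => hoff c (by omega) (by omega) (by omega) (by omega))
      (absurd (hmem j (by omega))) (absurd (hmem (j + 2) (by omega)))]
    simp only [flux, if_neg (show ¬((j : ℕ) = 0 ∨ (j : ℕ) = N) by omega),
      if_neg (show ¬((j : ℕ) + 1 = 0 ∨ (j : ℕ) + 1 = N) by omega)]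
    ring
  · rw [sum_eq_add (j : ℕ) 1 (by omega)
      (fun c hc hne => hoff c (by omega) (by rw [mem_range] at hc; omega) (by omega) (by omega))
      (absurd (hmem j (by omega))) (absurd (hmem 1 (by omega))), hlast,
      hw.eq_zero (a := 1) (b := N) (by omega)]
    simp only [flux, if_neg (show ¬((j : ℕ) = 0 ∨ (j : ℕ) = N) by omega), hlast]
    simp
    ring

/-- Back-substitution from node `N` downwards for the vector all of whose fluxes equal `1`. -/
def unitFluxNode (N : ℕ) (w : ℕ → ℕ → ℝ) (m : ℕ) : ℝ :=
  if h : m < N then (1 + w (m + 1) m * unitFluxNode N w (m + 1)) / w m (m + 1) else (w N 1)⁻¹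
termination_by N - m

def unitFluxVec (N : ℕ) (w : ℕ → ℕ → ℝ) : Fin N → ℝ := fun j => unitFluxNode N w (j + 1)

theorem nodeVal_unitFluxVec {m : ℕ} (h1 : 1 ≤ m) (hN : m ≤ N) :
    nodeVal (unitFluxVec N w) m = unitFluxNode N w m := by
  rw [nodeVal, dif_pos (by omega), unitFluxVec, Nat.sub_add_cancel h1]

theorem unitFluxNode_of_lt {m : ℕ} (h : m < N) :
    unitFluxNode N w m = (1 + w (m + 1) m * unitFluxNode N w (m + 1)) / w m (m + 1) := by
  rw [unitFluxNode, dif_pos h]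

theorem unitFluxNode_self : unitFluxNode N w N = (w N 1)⁻¹ := by
  rw [unitFluxNode, dif_neg (lt_irrefl N)]

theorem unitFluxNode_pos (hfwd : ∀ a, 1 ≤ a → a < N → 0 < w a (a + 1))
    (hbwd : ∀ a, 0 ≤ w (a + 1) a) (hwrap : 0 < w N 1) {m : ℕ} (h1 : 1 ≤ m) (hN : m ≤ N) :
    0 < unitFluxNode N w m := by
  induction hN using Nat.decreasingInduction with
  | self => exact unitFluxNode_self (w := w) ▸ inv_pos.2 hwrap
  | of_succ k hk ih =>
    rw [unitFluxNode_of_lt hk]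
    have := hbwd k
    have := ih (by omega)
    exact div_pos (by positivity) (hfwd k h1 hk)

theorem flux_unitFluxVec (hN : 0 < N) (hfwd : ∀ a, 1 ≤ a → a < N → 0 < w a (a + 1))
    (hwrap : 0 < w N 1) {m : ℕ} (hm : m ≤ N) : flux N w (unitFluxVec N w) m = 1 := by
  unfold flux
  split_ifs with h
  · rw [nodeVal_unitFluxVec hN le_rfl, unitFluxNode_self, mul_inv_cancel₀ hwrap.ne']
  · have hfwd_ne := (hfwd m (by omega) (by omega)).ne'
    rw [nodeVal_unitFluxVec (by omega) hm, nodeVal_unitFluxVec (by omega) (by omega),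
      unitFluxNode_of_lt (by omega), mul_div_cancel₀ _ hfwd_ne]
    ring

theorem digraphLaplacian_mulVec_unitFluxVec (hw : IsCycleSupported N w)
    (hfwd : ∀ a, 1 ≤ a → a < N → 0 < w a (a + 1)) (hwrap : 0 < w N 1) :
    digraphLaplacian N w *ᵥ unitFluxVec N w = 0 := by
  have hN := hw.three_le
  funext j
  have hj := j.isLt
  rw [digraphLaplacian_mulVec_eq_flux_sub hw, flux_unitFluxVec (by omega) hfwd hwrap (by omega),
    flux_unitFluxVec (by omega) hfwd hwrap (by omega), sub_self, Pi.zero_apply]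

theorem flux_eq_flux_zero_of_mulVec_eq_zero (hw : IsCycleSupported N w) {x : Fin N → ℝ}
    (hx : digraphLaplacian N w *ᵥ x = 0) {m : ℕ} (hm : m ≤ N) : flux N w x m = flux N w x 0 := by
  induction m with
  | zero => rfl
  | succ m ih =>
    have hrow := digraphLaplacian_mulVec_eq_flux_sub hw x ⟨m, hm⟩
    rw [hx, Pi.zero_apply] at hrow
    linarith [ih (by omega)]

theorem eq_zero_of_mulVec_eq_zero_of_nodeVal_last (hw : IsCycleSupported N w)
    (hfwd : ∀ a, 1 ≤ a → a < N → 0 < w a (a + 1)) {x : Fin N → ℝ}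
    (hx : digraphLaplacian N w *ᵥ x = 0) (hlast : nodeVal x N = 0) : x = 0 := by
  have hflux : ∀ m ≤ N, flux N w x m = 0 := fun m hm => by
    rw [flux_eq_flux_zero_of_mulVec_eq_zero hw hx hm, flux, if_pos (Or.inl rfl), hlast, mul_zero]
  have hnode : ∀ m ≤ N, 1 ≤ m → nodeVal x m = 0 := by
    intro m hm
    induction hm using Nat.decreasingInduction with
    | self => exact fun _ => hlast
    | of_succ k hk ih =>
      intro h1
      have hk0 := hflux k hk.le
      rw [flux, if_neg (by omega), ih (by omega), mul_zero, sub_zero] at hk0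
      exact (mul_eq_zero.1 hk0).resolve_left (hfwd k h1 hk).ne'
  funext j
  rw [← nodeVal_succ x j, hnode _ (by omega) (by omega), Pi.zero_apply]

theorem ker_mulVecLin_digraphLaplacian (hw : IsCycleSupported N w)
    (hfwd : ∀ a, 1 ≤ a → a < N → 0 < w a (a + 1)) (hwrap : 0 < w N 1) :
    LinearMap.ker (mulVecLin (digraphLaplacian N w)) = Submodule.span ℝ {unitFluxVec N w} := by
  have hN := hw.three_le
  have hρ := digraphLaplacian_mulVec_unitFluxVec hw hfwd hwrap
  refine le_antisymm (fun x hx => ?_) ((Submodule.span_singleton_le_iff_mem _ _).2 hρ)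
  rw [LinearMap.mem_ker, mulVecLin_apply] at hx
  refine Submodule.mem_span_singleton.2 ⟨nodeVal x N * w N 1, (sub_eq_zero.1 ?_).symm⟩
  refine eq_zero_of_mulVec_eq_zero_of_nodeVal_last hw hfwd ?_ ?_
  · rw [mulVec_sub, mulVec_smul, hx, hρ, smul_zero, sub_zero]
  · rw [nodeVal_sub_smul, nodeVal_unitFluxVec (by omega) le_rfl, unitFluxNode_self,
      mul_assoc, mul_inv_cancel₀ hwrap.ne', mul_one, sub_self]

end DigraphLaplacian

section Lab

variable {n : ℕ} {k l : ℕ → ℝ}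

theorem Atilde_eq_digraphLaplacian : Atilde n k l = digraphLaplacian (2 * n + 2) (lab n k l) :=
  rfl

theorem isCycleSupported_lab (hn : 1 ≤ n) : IsCycleSupported (2 * n + 2) (lab n k l) where
  three_le := by omega
  eq_zero h := by
    unfold lab
    split_ifs <;> first | rfl | (exfalso; omega)

theorem lab_nonneg (hk : ∀ i, 1 ≤ i → i ≤ 2 * n + 1 → 0 < k i)
    (hl : ∀ i, 1 ≤ i → i ≤ 2 * n + 1 → 0 < l i) (a b : ℕ) : 0 ≤ lab n k l a b := by
  unfold lab
  split_ifs <;> first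
    | exact le_rfl
    | exact (hk _ (by omega) (by omega)).le
    | exact (hl _ (by omega) (by omega)).le

theorem lab_succ_pos (hk : ∀ i, 1 ≤ i → i ≤ 2 * n + 1 → 0 < k i)
    (hl : ∀ i, 1 ≤ i → i ≤ 2 * n + 1 → 0 < l i) {a : ℕ} (h1 : 1 ≤ a) (h2 : a < 2 * n + 2) :
    0 < lab n k l a (a + 1) := by
  unfold lab
  split_ifs <;> first
    | exact hk _ (by omega) (by omega)
    | exact hl _ (by omega) (by omega)
    | (exfalso; omega)

theorem lab_wrap_pos (hl : ∀ i, 1 ≤ i → i ≤ 2 * n + 1 → 0 < l i) :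
    0 < lab n k l (2 * n + 2) 1 := by
  unfold lab
  split_ifs <;> first
    | exact hl 1 le_rfl (by omega)
    | (exfalso; omega)

end Lab

/-- The matrix `Ã_κᵗ` has rank `2n+1`, and its kernel is spanned by a vector with all
coordinates strictly positive. -/
theorem Atilde_rank_and_positive_kernel (n : ℕ) (hn : 1 ≤ n) (k l : ℕ → ℝ)
    (hk : ∀ i, 1 ≤ i → i ≤ 2*n+1 → 0 < k i)
    (hl : ∀ i, 1 ≤ i → i ≤ 2*n+1 → 0 < l i) :
    (Atilde n k l).rank = 2*n+1 ∧
    ∃ ρ : Fin (2*n+2) → ℝ, (∀ i, 0 < ρ i) ∧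
      LinearMap.ker (Matrix.mulVecLin (Atilde n k l)) = Submodule.span ℝ {ρ} := by
  have hfwd : ∀ a, 1 ≤ a → a < 2 * n + 2 → 0 < lab n k l a (a + 1) :=
    fun _ h1 h2 => lab_succ_pos hk hl h1 h2
  have hpos : ∀ i, 0 < unitFluxVec (2 * n + 2) (lab n k l) i := fun i =>
    unitFluxNode_pos hfwd (fun _ => lab_nonneg hk hl _ _) (lab_wrap_pos hl) (by omega) i.isLt
  have hker := ker_mulVecLin_digraphLaplacian (isCycleSupported_lab hn) hfwd (lab_wrap_pos hl)
  rw [Atilde_eq_digraphLaplacian]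
  refine ⟨?_, _, hpos, hker⟩
  rw [Matrix.rank_eq_card_sub_one_of_ker_eq_span (fun h => (hpos 0).ne' (congrFun h 0)) hker,
    Fintype.card_fin]
  rfl

end
end

section
/- The set of positive steady states of the processive n-site phosphorylation system, i.e. { x ∈ ℝ^{2n+4} : all coordinates of x are strictly positive and Γ·R(x) = 0 }, equals the image of the map χ. -/
open Matrix Finset

noncomputable section

/-- The value of a vector `ρ ∈ ℝ^(2n+2)` at the (1-based) math index `m`. -/
def Pget (n : ℕ) (ρ : Fin (2*n+2) → ℝ) (m : ℕ) : ℝ :=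
  if h : m - 1 < 2*n+2 then ρ ⟨m - 1, h⟩ else 0

/-- The parametrization `χ` of the positive steady states of the processive `n`-site
network (coordinates indexed 1-based): coordinate 1 is `(ρ₁/ρ_{2n+2})·(x₆/x₃)`,
coordinate 2 is `x₂`, coordinate 3 is `x₃`, coordinate 4 is `(ρ_{n+2}/ρ_{2n+2})·(x₆/x₂)`,
coordinate `2i+3` is `(ρ_{i+1}/ρ_{2n+2})·x₆` for `1 ≤ i ≤ n`, coordinate 6 is `x₆`, and
coordinate `2i+6` is `(ρ_{2n+2-i}/ρ_{2n+2})·x₆` for `1 ≤ i ≤ n-1`. -/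
def chi (n : ℕ) (ρ : Fin (2*n+2) → ℝ) (x2 x3 x6 : ℝ) : Fin (2*n+4) → ℝ := fun r =>
  let m := (r : ℕ) + 1
  if m = 1 then (Pget n ρ 1 / Pget n ρ (2*n+2)) * (x6 / x3)
  else if m = 2 then x2
  else if m = 3 then x3
  else if m = 4 then (Pget n ρ (n+2) / Pget n ρ (2*n+2)) * (x6 / x2)
  else if m = 6 then x6
  else if m % 2 = 1 then (Pget n ρ ((m-3)/2 + 1) / Pget n ρ (2*n+2)) * x6
  else (Pget n ρ (2*n+2 - (m-6)/2) / Pget n ρ (2*n+2)) * x6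

/-!
The digraph of `Ã_κᵗ` is the cycle `1 → 2 → ⋯ → 2n+2 → 1`, reversible except for the edges
`n+1 → n+2` and `2n+2 → 1`. Every species is produced by exactly one reaction and consumed by
exactly one, and these pairs link all `2n+2` reactions into a chain; hence `Γ v = 0` iff all
coordinates of `v` agree. The coordinates of `R(x)` are the net fluxes along the cycle of the
source monomials `y(x)` of its nodes, so `x` is a steady state iff `y(x)` has constant flux, and
`Ã_κᵗ ρ = 0` says the same of `ρ`. Constant-flux node values form a line: the difference between
`y(x)` and the multiple of `ρ` agreeing with it at node `2n+2` has zero flux through the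
irreversible edge `2n+2 → 1`, hence everywhere, and since forward labels are positive it vanishes
node by node downwards from `2n+2`. So `y(x) = (x₆/ρ_{2n+2}) ρ`, which says `x = χ(x₂, x₃, x₆)`.
-/

namespace Processive

section Flux

variable {R : Type*}

/-- The net flux through the edge pair `a ⇄ a+1` of a chain of nodes with values `w`, where
`f a` labels `a → a+1` and `b (a+1)` labels `a+1 → a`. -/
def flux [Ring R] (f b w : ℕ → R) (a : ℕ) : R := f a * w a - b (a + 1) * w (a + 1)

def ConstFlux [Ring R] (f b w : ℕ → R) (N : ℕ) : Prop :=
  ∀ a, 1 ≤ a → a ≤ N → flux f b w a = flux f b w 1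

theorem eq_of_forall_eq_succ {α : Type*} {g : ℕ → α} {p q : ℕ}
    (h : ∀ a, p ≤ a → a < q → g a = g (a + 1)) : ∀ a, p ≤ a → a ≤ q → g a = g p := by
  intro a hpa
  induction a, hpa using Nat.le_induction with
  | base => exact fun _ => rfl
  | succ a hpa ih => exact fun haq => (h a hpa haq).symm.trans (ih (by omega))

theorem eq_zero_of_flux_eq_zero [Ring R] [NoZeroDivisors R] {f b w : ℕ → R} {N : ℕ}
    (hf : ∀ a, 1 ≤ a → a < N → f a ≠ 0) (hflux : ∀ a, 1 ≤ a → a < N → flux f b w a = 0)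
    (hN : w N = 0) : ∀ a, 1 ≤ a → a ≤ N → w a = 0 := by
  intro a ha haN
  induction haN using Nat.decreasingInduction with
  | self => exact hN
  | of_succ a haN ih =>
    have h := hflux a ha haN
    rw [flux, ih (by omega), mul_zero, sub_zero] at h
    exact (mul_eq_zero.mp h).resolve_left (hf a ha haN)

theorem ConstFlux.eq_div_mul [Field R] {f b w u : ℕ → R} {N : ℕ} (hw : ConstFlux f b w N)
    (hu : ConstFlux f b u N) (hf : ∀ a, 1 ≤ a → a ≤ N → f a ≠ 0) (hb : b (N + 1) = 0)
    (huN : u N ≠ 0) : ∀ a, 1 ≤ a → a ≤ N → w a = w N / u N * u a := by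
  intro a ha haN
  set c := w N / u N
  set d : ℕ → R := fun a => w a - c * u a with hd
  have hflux_d : ∀ a, flux f b d a = flux f b w a - c * flux f b u a := by
    intro a
    simp only [flux, hd]
    ring
  have hdN : d N = 0 := by simp only [hd, c, div_mul_cancel₀ _ huN, sub_self]
  have hflux_zero : ∀ a, 1 ≤ a → a ≤ N → flux f b d a = 0 := by
    intro a ha haN
    rw [hflux_d, hw a ha haN, hu a ha haN, ← hw N (by omega) le_rfl, ← hu N (by omega) le_rfl,
      ← hflux_d, flux, hdN, hb]
    ring
  have := eq_zero_of_flux_eq_zero (fun a ha haN => hf a ha haN.le)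
    (fun a ha haN => hflux_zero a ha haN.le) hdN a ha haN
  simpa [hd, sub_eq_zero] using this

theorem ConstFlux.of_eq_mul [CommRing R] {f b w u : ℕ → R} {N : ℕ} (hu : ConstFlux f b u N)
    (hb : b (N + 1) = 0) (c : R) (hw : ∀ a, 1 ≤ a → a ≤ N → w a = c * u a) :
    ConstFlux f b w N := by
  have hflux : ∀ a, 1 ≤ a → a ≤ N → flux f b w a = c * flux f b u a := by
    intro a ha haN
    rcases haN.lt_or_eq with haN | rfl
    · rw [flux, flux, hw a ha haN.le, hw (a + 1) (by omega) haN]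
      ring
    · rw [flux, flux, hw a ha le_rfl, hb]
      ring
  intro a ha haN
  rw [hflux a ha haN, hflux 1 le_rfl (by omega), hu a ha haN]

theorem sum_fin_eq_sum_Ico [AddCommMonoid R] (N : ℕ) (g : ℕ → R) :
    ∑ i : Fin N, g (i + 1) = ∑ a ∈ Finset.Ico 1 (N + 1), g a := by
  rw [Fin.sum_univ_eq_sum_range (fun i => g (i + 1)), Finset.sum_Ico_eq_sum_range]
  simp only [add_comm, Nat.add_sub_cancel]

end Flux

/-- The label of the edge `a → a+1` (of `2n+2 → 1` for `a = 2n+2`) of the digraph of `Ã_κᵗ`. -/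
def fwd (n : ℕ) (k l : ℕ → ℝ) (a : ℕ) : ℝ :=
  if 1 ≤ a ∧ a ≤ n then k (2*a-1)
  else if a = n+1 then k (2*n+1)
  else if n+2 ≤ a ∧ a ≤ 2*n+1 then l (2*(2*n+2-a)+1)
  else if a = 2*n+2 then l 1
  else 0

/-- The label of the edge `a → a-1` of the digraph of `Ã_κᵗ` (`0` if there is none). -/
def bwd (n : ℕ) (k l : ℕ → ℝ) (a : ℕ) : ℝ :=
  if 2 ≤ a ∧ a ≤ n+1 then k (2*(a-1))
  else if n+3 ≤ a ∧ a ≤ 2*n+2 then l (2*(2*n+3-a))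
  else 0

def next (n a : ℕ) : ℕ := if a = 2*n+2 then 1 else a+1

/-- The source monomial of node `a`: the complexes at the nodes `1, …, 2n+2` are
`X₁+X₃, X₅, …, X_{2n+3}, X₂+X₄, X_{2n+4}, X_{2n+2}, …, X₆`. -/
def sourceMonomial (n : ℕ) (x : Fin (2*n+4) → ℝ) (a : ℕ) : ℝ :=
  if a = 1 then X n x 1 * X n x 3
  else if a ≤ n+1 then X n x (2*a+1)
  else if a = n+2 then X n x 2 * X n x 4
  else if a ≤ 2*n+2 then X n x (4*n+10-2*a)
  else 0

/-- The reaction (column of `Γ`) producing species `m`; `consumer n m` is the one consuming it. -/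
def producer (n m : ℕ) : ℕ :=
  if m = 1 ∨ m = 4 then n+1 else if m = 2 ∨ m = 3 then 2*n+2
  else if m % 2 = 1 then (m-3)/2 else 2*n+2 - (m-4)/2

def consumer (n m : ℕ) : ℕ :=
  if m = 1 ∨ m = 3 then 1 else if m = 2 ∨ m = 4 then n+2
  else if m % 2 = 1 then (m-1)/2 else 2*n+3 - (m-4)/2

section Network

variable {n : ℕ}

theorem X_succ (x : Fin (2*n+4) → ℝ) (r : Fin (2*n+4)) : X n x (r + 1) = x r := by
  rw [X, dif_pos (by omega)]
  rfl

theorem X_pos {x : Fin (2*n+4) → ℝ} (hx : ∀ i, 0 < x i) {m : ℕ} (hm : m ≤ 2*n+4) :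
    0 < X n x m := by
  rw [X, dif_pos (by omega)]
  exact hx _

theorem Pget_succ (ρ : Fin (2*n+2) → ℝ) (i : Fin (2*n+2)) : Pget n ρ (i + 1) = ρ i := by
  rw [Pget, dif_pos (by omega)]
  rfl

theorem Pget_pos {ρ : Fin (2*n+2) → ℝ} (hρ : ∀ i, 0 < ρ i) {a : ℕ} (ha : a ≤ 2*n+2) :
    0 < Pget n ρ a := by
  rw [Pget, dif_pos (by omega)]
  exact hρ _

theorem fwd_ne_zero {k l : ℕ → ℝ} (hk : ∀ i, 1 ≤ i → i ≤ 2*n+1 → 0 < k i)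
    (hl : ∀ i, 1 ≤ i → i ≤ 2*n+1 → 0 < l i) {a : ℕ} (h1 : 1 ≤ a) (h2 : a ≤ 2*n+2) :
    fwd n k l a ≠ 0 := by
  unfold fwd
  split_ifs <;>
    first | omega | exact (hk _ (by omega) (by omega)).ne' | exact (hl _ (by omega) (by omega)).ne'

theorem bwd_two_mul_add_three (k l : ℕ → ℝ) : bwd n k l (2*n+3) = 0 := by
  unfold bwd
  split_ifs <;> first | rfl | omega

theorem lab_eq_outEdges (hn : 1 ≤ n) (k l : ℕ → ℝ) {a : ℕ} (h1 : 1 ≤ a) (h2 : a ≤ 2*n+2)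
    (b : ℕ) :
    lab n k l a b =
      (if b = next n a then fwd n k l a else 0) + (if b = a - 1 then bwd n k l a else 0) := by
  unfold lab fwd bwd next
  obtain rfl | h | rfl | h | rfl :
      a = 1 ∨ (2 ≤ a ∧ a ≤ n) ∨ a = n + 1 ∨ (n + 2 ≤ a ∧ a ≤ 2*n+1) ∨ a = 2*n+2 := by
    omega
  all_goals simp (disch := omega) only [if_pos, if_neg, ↓reduceIte]
  all_goals split_ifs <;> grind

theorem lab_eq_inEdges (hn : 1 ≤ n) (k l : ℕ → ℝ) {a : ℕ} (h1 : 1 ≤ a) (h2 : a ≤ 2*n+2)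
    {b : ℕ} (hb1 : 2 ≤ b) (hb2 : b ≤ 2*n+2) :
    lab n k l a b =
      (if a = b - 1 then fwd n k l a else 0) + (if a = b + 1 then bwd n k l a else 0) := by
  rw [lab_eq_outEdges hn k l h1 h2, next]
  split_ifs <;> first | rfl | omega

theorem sum_range_lab (hn : 1 ≤ n) (k l : ℕ → ℝ) {a : ℕ} (h1 : 1 ≤ a) (h2 : a ≤ 2*n+2) :
    ∑ b ∈ Finset.range (2*n+3), lab n k l a b = fwd n k l a + bwd n k l a := by
  have hnext : next n a < 2*n+3 := by
    unfold next
    split_ifs <;> omega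
  simp only [lab_eq_outEdges hn k l h1 h2, Finset.sum_add_distrib, Finset.sum_ite_eq',
    Finset.mem_range, hnext, if_true, show a - 1 < 2*n+3 by omega]

theorem sum_lab_mul (hn : 1 ≤ n) (k l : ℕ → ℝ) (ρ : Fin (2*n+2) → ℝ) {m : ℕ}
    (h1 : 2 ≤ m) (h2 : m ≤ 2*n+2) :
    ∑ i : Fin (2*n+2), lab n k l (i + 1) m * ρ i =
      fwd n k l (m - 1) * Pget n ρ (m - 1) + bwd n k l (m + 1) * Pget n ρ (m + 1) := by
  calc ∑ i : Fin (2*n+2), lab n k l (i + 1) m * ρ i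
      = ∑ a ∈ Finset.Ico 1 (2*n+3), lab n k l a m * Pget n ρ a := by
        simp only [← sum_fin_eq_sum_Ico, Pget_succ]
    _ = ∑ a ∈ Finset.Ico 1 (2*n+3), ((if a = m - 1 then fwd n k l a else 0)
          + (if a = m + 1 then bwd n k l a else 0)) * Pget n ρ a := by
        refine Finset.sum_congr rfl fun a ha => ?_
        rw [Finset.mem_Ico] at ha
        rw [lab_eq_inEdges hn k l ha.1 (by omega) h1 h2]
    _ = _ := by
        simp only [add_mul, ite_mul, zero_mul, Finset.sum_add_distrib, Finset.sum_ite_eq',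
          Finset.mem_Ico]
        rw [if_pos (by omega)]
        split_ifs
        · rfl
        · rw [show m = 2*n+2 by omega, bwd_two_mul_add_three, zero_mul]

theorem Atilde_mulVec_apply (k l : ℕ → ℝ) (ρ : Fin (2*n+2) → ℝ) (j : Fin (2*n+2)) :
    (Atilde n k l *ᵥ ρ) j = ∑ i : Fin (2*n+2), lab n k l (i + 1) (j + 1) * ρ i
      - (∑ b ∈ Finset.range (2*n+3), lab n k l (j + 1) b) * ρ j := by
  have lab_self : lab n k l (j + 1) (j + 1) = 0 := by
    unfold lab
    split_ifs <;> first | rfl | omega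
  have entry : ∀ i, Atilde n k l j i * ρ i = lab n k l (i + 1) (j + 1) * ρ i
      - if j = i then (∑ b ∈ Finset.range (2*n+3), lab n k l (j + 1) b) * ρ j else 0 := by
    intro i
    by_cases h : j = i
    · subst h
      simp [Atilde, lab_self]
    · simp [Atilde, h]
  simp only [mulVec, dotProduct, entry, Finset.sum_sub_distrib, Finset.sum_ite_eq,
    Finset.mem_univ, if_true]

theorem Atilde_mulVec_apply_eq_flux_sub (hn : 1 ≤ n) (k l : ℕ → ℝ) (ρ : Fin (2*n+2) → ℝ)
    {m : ℕ} (h1 : 2 ≤ m) (h2 : m ≤ 2*n+2) :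
    (Atilde n k l *ᵥ ρ) ⟨m - 1, by omega⟩ =
      flux (fwd n k l) (bwd n k l) (Pget n ρ) (m - 1)
        - flux (fwd n k l) (bwd n k l) (Pget n ρ) m := by
  have hm : m - 1 + 1 = m := by omega
  rw [Atilde_mulVec_apply]
  simp only [hm, sum_lab_mul hn k l ρ h1 h2, sum_range_lab hn k l (by omega : 1 ≤ m) h2]
  rw [show ρ ⟨m - 1, _⟩ = Pget n ρ m by rw [Pget, dif_pos]]
  unfold flux
  rw [hm]
  ring

theorem constFlux_of_Atilde_mulVec_eq_zero (hn : 1 ≤ n) {k l : ℕ → ℝ} {ρ : Fin (2*n+2) → ℝ}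
    (hker : Atilde n k l *ᵥ ρ = 0) : ConstFlux (fwd n k l) (bwd n k l) (Pget n ρ) (2*n+2) := by
  refine eq_of_forall_eq_succ fun a h1 h2 => ?_
  have h := Atilde_mulVec_apply_eq_flux_sub hn k l ρ (m := a + 1) (by omega) (by omega)
  simp only [hker, Pi.zero_apply, Nat.add_sub_cancel] at h
  exact sub_eq_zero.mp h.symm

theorem producer_mem {m : ℕ} (h : m ≤ 2*n+4) :
    1 ≤ producer n m ∧ producer n m ≤ 2*n+2 := by
  unfold producer
  split_ifs <;> omega

theorem consumer_mem {m : ℕ} (h1 : 1 ≤ m) (h2 : m ≤ 2*n+4) :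
    1 ≤ consumer n m ∧ consumer n m ≤ 2*n+2 := by
  unfold consumer
  split_ifs <;> omega

theorem exists_producer_consumer {a : ℕ} (h1 : 1 ≤ a) (h2 : a ≤ 2*n+1) :
    ∃ m, 1 ≤ m ∧ m ≤ 2*n+4 ∧ producer n m = a ∧ consumer n m = a + 1 := by
  obtain h | rfl | h : a ≤ n ∨ a = n + 1 ∨ n + 2 ≤ a := by omega
  · refine ⟨2*a+3, by omega, by omega, ?_⟩
    simp (disch := omega) only [producer, consumer, if_pos, if_neg]
    omega
  · exact ⟨4, by omega, by omega, by simp [producer, consumer]⟩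
  · refine ⟨4*n+8-2*a, by omega, by omega, ?_⟩
    simp (disch := omega) only [producer, consumer, if_neg]
    omega

theorem Gamma_apply (hn : 1 ≤ n) (r : Fin (2*n+4)) (c : Fin (2*n+2)) :
    Gamma n r c = (if (c : ℕ) + 1 = producer n (r + 1) then 1 else 0)
      - (if (c : ℕ) + 1 = consumer n (r + 1) then 1 else 0) := by
  have hr : (r : ℕ) + 1 ≤ 2*n+4 := r.isLt
  have hr' : 1 ≤ (r : ℕ) + 1 := by omega
  have hc := c.isLt
  rw [Gamma, of_apply]
  obtain h | h | h | h | h | h :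
      (c : ℕ) = 0 ∨ (1 ≤ (c : ℕ) ∧ (c : ℕ) < n) ∨ (c : ℕ) = n ∨ (c : ℕ) = n + 1
        ∨ (n + 2 ≤ (c : ℕ) ∧ (c : ℕ) ≤ 2*n) ∨ (c : ℕ) = 2*n+1 := by
    omega
  all_goals simp (disch := omega) only [if_pos, if_neg]
  all_goals simp only [E, Pi.sub_apply, Pi.add_apply]
  all_goals generalize (r : ℕ) + 1 = m at *
  all_goals obtain h' | h' | h' | h' | h' | h' :
      m = 1 ∨ m = 2 ∨ m = 3 ∨ m = 4 ∨ (m % 2 = 1 ∧ 5 ≤ m) ∨ (m % 2 = 0 ∧ 6 ≤ m) := by omega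
  all_goals simp (disch := omega) only [producer, consumer, if_pos, if_neg]
  all_goals (try split_ifs) <;> first | omega | simp

theorem Gamma_mulVec_apply (hn : 1 ≤ n) (v : Fin (2*n+2) → ℝ) (r : Fin (2*n+4)) :
    (Gamma n *ᵥ v) r = Pget n v (producer n (r + 1)) - Pget n v (consumer n (r + 1)) := by
  have hp := producer_mem (n := n) (m := r + 1) r.isLt
  have hc := consumer_mem (n := n) (m := r + 1) (by omega) r.isLt
  simp only [mulVec, dotProduct, Gamma_apply hn, ← Pget_succ v]
  rw [sum_fin_eq_sum_Ico (2*n+2) fun a => ((if a = producer n (r + 1) then 1 else 0)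
    - (if a = consumer n (r + 1) then 1 else 0)) * Pget n v a]
  simp only [sub_mul, ite_mul, one_mul, zero_mul, Finset.sum_sub_distrib, Finset.sum_ite_eq',
    Finset.mem_Ico]
  rw [if_pos (by omega), if_pos (by omega)]

theorem Gamma_mulVec_eq_zero_iff (hn : 1 ≤ n) (v : Fin (2*n+2) → ℝ) :
    Gamma n *ᵥ v = 0 ↔ ∀ a, 1 ≤ a → a ≤ 2*n+2 → Pget n v a = Pget n v 1 := by
  constructor
  · intro h
    refine eq_of_forall_eq_succ fun a h1 h2 => ?_
    obtain ⟨m, hm1, hm2, hp, hc⟩ := exists_producer_consumer (n := n) h1 (by omega)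
    have hrow := congrFun h ⟨m - 1, by omega⟩
    rw [Gamma_mulVec_apply hn, Fin.val_mk, Nat.sub_add_cancel hm1, hp, hc] at hrow
    exact sub_eq_zero.mp hrow
  · intro h
    funext r
    obtain ⟨hp1, hp2⟩ := producer_mem (n := n) (m := r + 1) r.isLt
    obtain ⟨hc1, hc2⟩ := consumer_mem (n := n) (m := r + 1) (by omega) r.isLt
    rw [Gamma_mulVec_apply hn, h _ hp1 hp2, h _ hc1 hc2, sub_self, Pi.zero_apply]

theorem Pget_Rvec (hn : 1 ≤ n) (k l : ℕ → ℝ) (x : Fin (2*n+4) → ℝ) {a : ℕ}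
    (h1 : 1 ≤ a) (h2 : a ≤ 2*n+2) :
    Pget n (Rvec n k l x) a = flux (fwd n k l) (bwd n k l) (sourceMonomial n x) a := by
  rw [Pget, dif_pos (by omega), Rvec]
  simp only [show a - 1 + 1 = a by omega]
  unfold flux fwd bwd sourceMonomial
  obtain rfl | h | rfl | rfl | h | rfl :
      a = 1 ∨ (2 ≤ a ∧ a ≤ n) ∨ a = n + 1 ∨ a = n + 2 ∨ (n + 3 ≤ a ∧ a ≤ 2*n+1)
        ∨ a = 2*n+2 := by
    omega
  all_goals simp (disch := omega) only [if_pos, if_neg, ↓reduceIte]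
  all_goals grind

theorem Gamma_mulVec_Rvec_eq_zero_iff (hn : 1 ≤ n) (k l : ℕ → ℝ) (x : Fin (2*n+4) → ℝ) :
    Gamma n *ᵥ Rvec n k l x = 0 ↔
      ConstFlux (fwd n k l) (bwd n k l) (sourceMonomial n x) (2*n+2) := by
  rw [Gamma_mulVec_eq_zero_iff hn]
  refine forall₃_congr fun a h1 h2 => ?_
  rw [Pget_Rvec hn k l x h1 h2, Pget_Rvec hn k l x le_rfl (by omega)]

theorem sourceMonomial_two_mul_add_two (hn : 1 ≤ n) (x : Fin (2*n+4) → ℝ) :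
    sourceMonomial n x (2*n+2) = X n x 6 := by
  simp (disch := omega) only [sourceMonomial, if_pos, if_neg]
  congr 1
  omega

theorem sourceMonomial_chi (hn : 1 ≤ n) (ρ : Fin (2*n+2) → ℝ) {x2 x3 x6 : ℝ} (h2 : x2 ≠ 0)
    (h3 : x3 ≠ 0) (hρ : Pget n ρ (2*n+2) ≠ 0) {a : ℕ} (ha1 : 1 ≤ a) (ha2 : a ≤ 2*n+2) :
    sourceMonomial n (chi n ρ x2 x3 x6) a = x6 / Pget n ρ (2*n+2) * Pget n ρ a := by
  unfold sourceMonomial X chi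
  obtain rfl | h | rfl | h | rfl :
      a = 1 ∨ (2 ≤ a ∧ a ≤ n + 1) ∨ a = n + 2 ∨ (n + 3 ≤ a ∧ a ≤ 2*n+1) ∨ a = 2*n+2 := by
    omega
  all_goals simp (disch := omega) only [dif_pos, if_pos, if_neg, Nat.sub_add_cancel, ↓reduceIte]
  · field_simp
  · rw [show (2*a+1-3)/2+1 = a by omega]
    ring
  · field_simp
  · rw [show 2*n+2 - (4*n+10-2*a-6)/2 = a by omega]
    ring
  · field_simp

theorem chi_pos {ρ : Fin (2*n+2) → ℝ} (hρ : ∀ i, 0 < ρ i) {x2 x3 x6 : ℝ} (h2 : 0 < x2)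
    (h3 : 0 < x3) (h6 : 0 < x6) (r : Fin (2*n+4)) : 0 < chi n ρ x2 x3 x6 r := by
  have hρtop := Pget_pos hρ (le_refl (2*n+2))
  simp only [chi]
  split_ifs <;>
    first | assumption | exact mul_pos (div_pos (Pget_pos hρ (by omega)) hρtop) (by positivity)

theorem eq_of_sourceMonomial_eq {x z : Fin (2*n+4) → ℝ}
    (h2 : X n z 2 = X n x 2) (h3 : X n z 3 = X n x 3) (hx2 : X n x 2 ≠ 0) (hx3 : X n x 3 ≠ 0)
    (hY : ∀ a, 1 ≤ a → a ≤ 2*n+2 → sourceMonomial n z a = sourceMonomial n x a) : z = x := by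
  funext r
  rw [← X_succ z r, ← X_succ x r]
  have hr : (r : ℕ) + 1 ≤ 2*n+4 := r.isLt
  have hr' : 1 ≤ (r : ℕ) + 1 := by omega
  generalize (r : ℕ) + 1 = m at *
  obtain rfl | rfl | rfl | rfl | h | h :
      m = 1 ∨ m = 2 ∨ m = 3 ∨ m = 4 ∨ (m % 2 = 1 ∧ 5 ≤ m) ∨ (m % 2 = 0 ∧ 6 ≤ m) := by
    omega
  · have h := hY 1 le_rfl (by omega)
    simp only [sourceMonomial, if_pos, h3] at h
    exact mul_right_cancel₀ hx3 h
  · exact h2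
  · exact h3
  · have h := hY (n + 2) (by omega) (by omega)
    simp (disch := omega) only [sourceMonomial, if_pos, if_neg, h2] at h
    exact mul_left_cancel₀ hx2 h
  · have h := hY ((m - 1) / 2) (by omega) (by omega)
    simp (disch := omega) only [sourceMonomial, if_pos, if_neg] at h
    rwa [show 2 * ((m - 1) / 2) + 1 = m by omega] at h
  · have h := hY (2*n+5 - m/2) (by omega) (by omega)
    simp (disch := omega) only [sourceMonomial, if_pos, if_neg] at h
    rwa [show 4*n+10 - 2 * (2*n+5 - m/2) = m by omega] at h

theorem eq_chi_of_sourceMonomial_eq (hn : 1 ≤ n) {ρ : Fin (2*n+2) → ℝ} {x : Fin (2*n+4) → ℝ}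
    (hx2 : X n x 2 ≠ 0) (hx3 : X n x 3 ≠ 0) (hρ : Pget n ρ (2*n+2) ≠ 0)
    (hY : ∀ a, 1 ≤ a → a ≤ 2*n+2 →
      sourceMonomial n x a = X n x 6 / Pget n ρ (2*n+2) * Pget n ρ a) :
    x = chi n ρ (X n x 2) (X n x 3) (X n x 6) := by
  refine (eq_of_sourceMonomial_eq ?_ ?_ hx2 hx3 fun a h1 h2 => ?_).symm
  · simp [X, chi]
  · simp [X, chi]
  · rw [sourceMonomial_chi hn ρ hx2 hx3 hρ h1 h2, hY a h1 h2]

end Network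

end Processive

open Processive

/-- The set of positive steady states of the processive `n`-site phosphorylation system
equals the image of the map `χ` on positive inputs. -/
theorem positive_steady_states_eq_image_chi (n : ℕ) (hn : 1 ≤ n) (k l : ℕ → ℝ)
    (hk : ∀ i, 1 ≤ i → i ≤ 2*n+1 → 0 < k i)
    (hl : ∀ i, 1 ≤ i → i ≤ 2*n+1 → 0 < l i)
    (ρ : Fin (2*n+2) → ℝ) (hρ : ∀ i, 0 < ρ i)
    (hker : (Atilde n k l).mulVec ρ = 0) :
    {x : Fin (2*n+4) → ℝ | (∀ i, 0 < x i) ∧ (Gamma n).mulVec (Rvec n k l x) = 0} =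
    {x : Fin (2*n+4) → ℝ |
      ∃ x2 x3 x6 : ℝ, 0 < x2 ∧ 0 < x3 ∧ 0 < x6 ∧ x = chi n ρ x2 x3 x6} := by
  have hρtop : Pget n ρ (2*n+2) ≠ 0 := (Pget_pos hρ le_rfl).ne'
  have hρflux := constFlux_of_Atilde_mulVec_eq_zero hn hker
  ext x
  simp only [Set.mem_ofPred_eq, Gamma_mulVec_Rvec_eq_zero_iff hn]
  constructor
  · rintro ⟨hx, hflux⟩
    have hY := hflux.eq_div_mul hρflux (fun a h1 h2 => fwd_ne_zero hk hl h1 h2)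
      (bwd_two_mul_add_three k l) hρtop
    rw [sourceMonomial_two_mul_add_two hn] at hY
    have hx2 := X_pos hx (m := 2) (by omega)
    have hx3 := X_pos hx (m := 3) (by omega)
    exact ⟨_, _, _, hx2, hx3, X_pos hx (by omega),
      eq_chi_of_sourceMonomial_eq hn hx2.ne' hx3.ne' hρtop hY⟩
  · rintro ⟨x2, x3, x6, h2, h3, h6, rfl⟩
    exact ⟨chi_pos hρ h2 h3 h6, hρflux.of_eq_mul (bwd_two_mul_add_three k l) _
      fun a h1 h2' => sourceMonomial_chi hn ρ h2.ne' h3.ne' hρtop h1 h2'⟩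

end
end

section
/- If α ∈ ℝ^{2n+4} lies in the column space of the matrix B, s ∈ ℝ^{2n+4} lies in the column space of Γ, and sign(αᵢ) = sign(sᵢ) for every i ∈ {1,…,2n+4}, then α = 0 and s = 0. (That is, the sign vectors of the image of B and of the stoichiometric subspace intersect only in the zero sign vector.) -/
/-! A vector `s` of the stoichiometric subspace satisfies the three conservation laws of the
network: total kinase, total phosphatase and total substrate. A vector `α = B y` has
`α₁ = y₃ - y₂`, `α₂ = y₁`, `α₃ = y₂`, `α₄ = y₃ - y₁` and `αᵢ = y₃` for `i ≥ 5`. Replacing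
`(α, s)` by `(-α, -s)` we may assume `y₃ ≥ 0`, so `sᵢ ≥ 0` for `i ≥ 5`. The kinase and
phosphatase laws then force `s₁, s₂ ≤ 0`, hence `y₂ ≥ y₃ ≥ 0` and `y₁ ≤ 0`, which makes
`s₃, s₄ ≥ 0`. Now the substrate law gives `sᵢ = 0` for `i ≥ 3`, the other two laws give
`s₁ = s₂ = 0`, and `α = 0` by the sign condition.

Indices here are the paper's; in the code coordinate `i` is `⟨i - 1, _⟩` and `yᵢ` is `y (i - 1)`.
-/

open Matrix Finset

noncomputable section

/-- The `(2n+4) × 3` matrix `B` whose columns are `e₂ - e₄`, `e₃ - e₁` and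
`e₁ + e₄ + e₅ + ⋯ + e_{2n+4}` (rows indexed 1-based). -/
def Bmat (n : ℕ) : Matrix (Fin (2*n+4)) (Fin 3) ℝ :=
  Matrix.of fun r c =>
    let m := (r : ℕ) + 1
    if (c : ℕ) = 0 then (if m = 2 then (1:ℝ) else if m = 4 then -1 else 0)
    else if (c : ℕ) = 1 then (if m = 3 then 1 else if m = 1 then -1 else 0)
    else (if m = 2 ∨ m = 3 then 0 else 1)

theorem nonneg_of_sign_eq {a b : ℝ} (h : Real.sign a = Real.sign b) (ha : 0 ≤ a) : 0 ≤ b := by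
  by_contra! hb
  rw [Real.sign_of_neg hb] at h
  rcases ha.eq_or_lt with rfl | ha
  · norm_num [Real.sign_zero] at h
  · norm_num [Real.sign_of_pos ha] at h

theorem nonpos_of_sign_eq {a b : ℝ} (h : Real.sign a = Real.sign b) (ha : a ≤ 0) : b ≤ 0 :=
  neg_nonneg.1 <| nonneg_of_sign_eq (a := -a) (by rw [Real.sign_neg, Real.sign_neg, h])
    (neg_nonneg.2 ha)

theorem dotProduct_eq_zero_of_vecMul_eq_zero {ι κ : Type*} [Fintype ι] [Fintype κ]
    {M : Matrix ι κ ℝ} {w s : ι → ℝ} (hw : w ᵥ* M = 0) (hs : s ∈ LinearMap.range M.mulVecLin) :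
    w ⬝ᵥ s = 0 := by
  obtain ⟨v, rfl⟩ := hs
  rw [mulVecLin_apply, dotProduct_mulVec, hw, zero_dotProduct]

theorem boole_mul_nonneg {p : Prop} [Decidable p] {x : ℝ} (h : p → 0 ≤ x) :
    0 ≤ (if p then 1 else 0) * x := by
  rw [boole_mul]
  split_ifs with hp
  exacts [h hp, le_rfl]

theorem boole_mul_eq_zero {p : Prop} [Decidable p] {x : ℝ} (h : p → x = 0) :
    (if p then 1 else 0) * x = 0 := by
  rw [boole_mul]
  split_ifs with hp
  exacts [h hp, rfl]

section Balance

variable {ι : Type*} [Fintype ι] {w s : ι → ℝ}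

theorem eq_neg_sum_erase_of_dotProduct_eq_zero [DecidableEq ι] (h : w ⬝ᵥ s = 0) {i : ι}
    (hi : w i = 1) : s i = -∑ j ∈ univ.erase i, w j * s j := by
  rw [dotProduct, ← add_sum_erase _ _ (mem_univ i), hi, one_mul] at h
  linarith

theorem nonpos_of_dotProduct_eq_zero (h : w ⬝ᵥ s = 0) {i : ι} (hi : w i = 1)
    (hrest : ∀ j ≠ i, 0 ≤ w j * s j) : s i ≤ 0 := by
  classical
  rw [eq_neg_sum_erase_of_dotProduct_eq_zero h hi, neg_nonpos]
  exact sum_nonneg fun j hj => hrest j (ne_of_mem_erase hj)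

theorem eq_zero_of_dotProduct_eq_zero (h : w ⬝ᵥ s = 0) {i : ι} (hi : w i = 1)
    (hrest : ∀ j ≠ i, w j * s j = 0) : s i = 0 := by
  classical
  rw [eq_neg_sum_erase_of_dotProduct_eq_zero h hi, neg_eq_zero]
  exact sum_eq_zero fun j hj => hrest j (ne_of_mem_erase hj)

theorem mul_eq_zero_of_dotProduct_eq_zero (h : w ⬝ᵥ s = 0) (hnonneg : ∀ j, 0 ≤ w j * s j)
    (j : ι) : w j * s j = 0 :=
  (sum_eq_zero_iff_of_nonneg fun j _ => hnonneg j).1 h j (mem_univ j)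

end Balance

def ofOneBased (n : ℕ) (f : ℕ → ℝ) : Fin (2*n+4) → ℝ := fun j => f (j + 1)

section Network

variable {n : ℕ}

theorem sum_ofOneBased_mul_E (f : ℕ → ℝ) {m : ℕ} (h1 : 1 ≤ m) (h2 : m ≤ 2*n+4) :
    ∑ j, ofOneBased n f j * E n m j = f m := by
  rw [sum_eq_single (⟨m - 1, by omega⟩ : Fin (2*n+4))]
  · simp only [ofOneBased, E]
    rw [if_pos (by omega), mul_one]
    congr 1
    omega
  · intro j _ hj
    rw [E, if_neg, mul_zero]
    exact fun h => hj (Fin.ext (show (j : ℕ) = m - 1 by omega))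
  · simp

theorem ofOneBased_vecMul_Gamma_eq_zero (hn : 1 ≤ n) {f : ℕ → ℝ} (h₁ : f 5 = f 1 + f 3)
    (h₂ : ∀ i, 1 ≤ i → i < n → f (2*i+5) = f (2*i+3)) (h₃ : f 1 + f 4 = f (2*n+3))
    (h₄ : f (2*n+4) = f 2 + f 4)
    (h₅ : ∀ i, 1 ≤ i → i < n → f (2*n+4-2*i) = f (2*n+6-2*i)) (h₆ : f 2 + f 3 = f 6) :
    ofOneBased n f ᵥ* Gamma n = 0 := by
  funext c
  have hc := c.isLt
  simp only [vecMul, dotProduct, Gamma, of_apply, Pi.zero_apply]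
  split_ifs <;>
    simp only [Pi.add_apply, Pi.sub_apply, mul_add, mul_sub, sum_add_distrib, sum_sub_distrib] <;>
    repeat rw [sum_ofOneBased_mul_E f (by omega) (by omega)]
  · linarith
  · rw [h₂ _ (by omega) (by omega), sub_self]
  · linarith
  · linarith
  · rw [h₅ _ (by omega) (by omega), sub_self]
  · linarith

/- The conservation laws of the network: total kinase (x₁ and the complexes x₅, x₇, …),
total phosphatase (x₂ and x₆, x₈, …) and total substrate (x₃, …, x_{2n+4}). -/
def kinaseWeight (n : ℕ) : Fin (2*n+4) → ℝ :=
  ofOneBased n fun m => if m = 1 ∨ (m % 2 = 1 ∧ 5 ≤ m) then 1 else 0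

def phosphataseWeight (n : ℕ) : Fin (2*n+4) → ℝ :=
  ofOneBased n fun m => if m = 2 ∨ (m % 2 = 0 ∧ 6 ≤ m) then 1 else 0

def substrateWeight (n : ℕ) : Fin (2*n+4) → ℝ :=
  ofOneBased n fun m => if 3 ≤ m then 1 else 0

theorem kinaseWeight_vecMul_Gamma (hn : 1 ≤ n) : kinaseWeight n ᵥ* Gamma n = 0 := by
  apply ofOneBased_vecMul_Gamma_eq_zero hn <;> intros <;> split_ifs <;> norm_num at * <;> omega

theorem phosphataseWeight_vecMul_Gamma (hn : 1 ≤ n) : phosphataseWeight n ᵥ* Gamma n = 0 := by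
  apply ofOneBased_vecMul_Gamma_eq_zero hn <;> intros <;> split_ifs <;> norm_num at * <;> omega

theorem substrateWeight_vecMul_Gamma (hn : 1 ≤ n) : substrateWeight n ᵥ* Gamma n = 0 := by
  apply ofOneBased_vecMul_Gamma_eq_zero hn <;> intros <;> split_ifs <;> norm_num at * <;> omega

theorem Bmat_mulVec_apply (y : Fin 3 → ℝ) (r : Fin (2*n+4)) :
    (Bmat n *ᵥ y) r =
      if (r : ℕ) = 0 then y 2 - y 1
      else if (r : ℕ) = 1 then y 0
      else if (r : ℕ) = 2 then y 1
      else if (r : ℕ) = 3 then y 2 - y 0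
      else y 2 := by
  simp only [mulVec, dotProduct, Fin.sum_univ_three, Bmat, of_apply,
    show ((0 : Fin 3) : ℕ) = 0 from rfl, show ((1 : Fin 3) : ℕ) = 1 from rfl,
    show ((2 : Fin 3) : ℕ) = 2 from rfl]
  split_ifs <;> first | contradiction | omega | ring

theorem nonneg_of_two_le_of_sign_eq (hn : 1 ≤ n) (y : Fin 3 → ℝ) {s : Fin (2*n+4) → ℝ}
    (hs : s ∈ LinearMap.range (Gamma n).mulVecLin)
    (hsign : ∀ i, Real.sign ((Bmat n *ᵥ y) i) = Real.sign (s i)) (hy : 0 ≤ y 2) :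
    ∀ j : Fin (2*n+4), 2 ≤ (j : ℕ) → 0 ≤ s j := by
  have hB := Bmat_mulVec_apply (n := n) y
  have complexes : ∀ j : Fin (2*n+4), 4 ≤ (j : ℕ) → 0 ≤ s j := fun j hj =>
    nonneg_of_sign_eq (hsign j) (by rw [hB, if_neg (by omega), if_neg (by omega),
      if_neg (by omega), if_neg (by omega)]; exact hy)
  have hs0 : s ⟨0, by omega⟩ ≤ 0 :=
    nonpos_of_dotProduct_eq_zero
      (dotProduct_eq_zero_of_vecMul_eq_zero (kinaseWeight_vecMul_Gamma hn) hs) rfl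
      fun j hj => boole_mul_nonneg fun _ =>
        complexes j (by have : (j : ℕ) ≠ 0 := Fin.val_ne_of_ne hj; omega)
  have hs1 : s ⟨1, by omega⟩ ≤ 0 :=
    nonpos_of_dotProduct_eq_zero
      (dotProduct_eq_zero_of_vecMul_eq_zero (phosphataseWeight_vecMul_Gamma hn) hs) rfl
      fun j hj => boole_mul_nonneg fun _ =>
        complexes j (by have : (j : ℕ) ≠ 1 := Fin.val_ne_of_ne hj; omega)
  have hy₁ : y 2 ≤ y 1 := by
    have := nonpos_of_sign_eq (hsign _).symm hs0
    rw [hB, if_pos rfl] at this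
    linarith
  have hy₀ : y 0 ≤ 0 := by
    have := nonpos_of_sign_eq (hsign _).symm hs1
    rwa [hB, if_neg Nat.one_ne_zero, if_pos rfl] at this
  intro j hj
  rcases (show (j : ℕ) = 2 ∨ (j : ℕ) = 3 ∨ 4 ≤ (j : ℕ) by omega) with hj | hj | hj
  · refine nonneg_of_sign_eq (hsign j) ?_
    rw [hB, if_neg (by omega), if_neg (by omega), if_pos hj]
    linarith
  · refine nonneg_of_sign_eq (hsign j) ?_
    rw [hB, if_neg (by omega), if_neg (by omega), if_neg (by omega), if_pos hj]
    linarith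
  · exact complexes j hj

theorem eq_zero_of_nonneg_of_two_le (hn : 1 ≤ n) {s : Fin (2*n+4) → ℝ}
    (hs : s ∈ LinearMap.range (Gamma n).mulVecLin)
    (hnonneg : ∀ j : Fin (2*n+4), 2 ≤ (j : ℕ) → 0 ≤ s j) : s = 0 := by
  have substrate : ∀ j : Fin (2*n+4), 2 ≤ (j : ℕ) → s j = 0 := by
    intro j hj
    have := mul_eq_zero_of_dotProduct_eq_zero
      (dotProduct_eq_zero_of_vecMul_eq_zero (substrateWeight_vecMul_Gamma hn) hs)
      (fun k => boole_mul_nonneg fun hk => hnonneg k (by omega)) j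
    rwa [substrateWeight, ofOneBased, if_pos (by omega), one_mul] at this
  funext j
  rcases (show (j : ℕ) = 0 ∨ (j : ℕ) = 1 ∨ 2 ≤ (j : ℕ) by omega) with hj | hj | hj
  · rw [show j = ⟨0, by omega⟩ from Fin.ext hj]
    exact eq_zero_of_dotProduct_eq_zero
      (dotProduct_eq_zero_of_vecMul_eq_zero (kinaseWeight_vecMul_Gamma hn) hs) rfl
      fun k hk => boole_mul_eq_zero fun _ =>
        substrate k (by have : (k : ℕ) ≠ 0 := Fin.val_ne_of_ne hk; omega)
  · rw [show j = ⟨1, by omega⟩ from Fin.ext hj]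
    exact eq_zero_of_dotProduct_eq_zero
      (dotProduct_eq_zero_of_vecMul_eq_zero (phosphataseWeight_vecMul_Gamma hn) hs) rfl
      fun k hk => boole_mul_eq_zero fun _ =>
        substrate k (by have : (k : ℕ) ≠ 1 := Fin.val_ne_of_ne hk; omega)
  · exact substrate j hj

end Network

/-- The sign vectors of the image of `B` and of the stoichiometric subspace (the column
space of `Γ`) intersect only in the zero sign vector: if `α ∈ im(B)`, `s ∈ im(Γ)` and
`sign(αᵢ) = sign(sᵢ)` for all `i`, then `α = 0` and `s = 0`. -/
theorem sign_condition (n : ℕ) (hn : 1 ≤ n) (α s : Fin (2*n+4) → ℝ)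
    (hα : α ∈ LinearMap.range (Matrix.mulVecLin (Bmat n)))
    (hs : s ∈ LinearMap.range (Matrix.mulVecLin (Gamma n)))
    (hsign : ∀ i, Real.sign (α i) = Real.sign (s i)) :
    α = 0 ∧ s = 0 := by
  obtain ⟨y, rfl⟩ := hα
  have hs₀ : s = 0 := by
    rcases le_total 0 (y 2) with hy | hy
    · exact eq_zero_of_nonneg_of_two_le hn hs (nonneg_of_two_le_of_sign_eq hn y hs hsign hy)
    · have hsign' : ∀ i, Real.sign ((Bmat n *ᵥ -y) i) = Real.sign ((-s) i) := fun i => by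
        rw [mulVec_neg, Pi.neg_apply, Pi.neg_apply, Real.sign_neg, Real.sign_neg, ← hsign i]
        rfl
      exact neg_eq_zero.1 <| eq_zero_of_nonneg_of_two_le hn (neg_mem hs)
        (nonneg_of_two_le_of_sign_eq hn (-y) (neg_mem hs) hsign' (by simpa using hy))
  refine ⟨funext fun i => Real.sign_eq_zero_iff.1 ?_, hs₀⟩
  rw [hsign i, hs₀, Pi.zero_apply, Real.sign_zero]

end
end

section
/- For every vector a ∈ ℝ^{2n+4} with all coordinates strictly positive, the map from (0,∞)³ to ℝ³ sending ξ to 𝒜·(a ∘ Ψ_B(ξ)), where ∘ denotes the componentwise (Hadamard) product, is injective. -/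
open Matrix Finset

noncomputable section

/-- The monomial map `Ψ_B : (0,∞)³ → ℝ^(2n+4)` defined by the rows of `B`
(using real exponentiation). -/
def PsiB (n : ℕ) (ξ : Fin 3 → ℝ) : Fin (2*n+4) → ℝ := fun i =>
  (ξ 0) ^ (Bmat n i 0) * (ξ 1) ^ (Bmat n i 1) * (ξ 2) ^ (Bmat n i 2)

/-! Every coordinate of `Ψ_B(ξ)` from the fifth on equals `ξ₃`, so `𝒜 (a ∘ Ψ_B(ξ))` is
`(a₁ ξ₃/ξ₂ + c₁ ξ₃, a₂ ξ₁ + c₂ ξ₃, a₃ ξ₂ + a₄ ξ₃/ξ₁ + c₃ ξ₃)` with weights `c_r ≥ 0`.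
If positive `ξ`, `ξ'` have the same image and `ξ₃ ≤ ξ'₃`, the first coordinate forces
`ξ₂ ≤ ξ'₂`, the third then `ξ₁ ≤ ξ'₁`, the second `ξ₁ = ξ'₁`, and the third once more
`ξ₃ = ξ'₃` and `ξ₂ = ξ'₂`. -/

def reducedMap (a : Fin 4 → ℝ) (c ξ : Fin 3 → ℝ) : Fin 3 → ℝ :=
  ![a 0 * (ξ 2 / ξ 1) + c 0 * ξ 2,
    a 1 * ξ 0 + c 1 * ξ 2,
    a 2 * ξ 1 + a 3 * (ξ 2 / ξ 0) + c 2 * ξ 2]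

theorem le_of_div_le_div_of_le {y y' z z' : ℝ} (hy : 0 < y) (hy' : 0 < y') (hz' : 0 < z')
    (hz : z ≤ z') (h : z' / y' ≤ z / y) : y ≤ y' :=
  (div_le_div_iff_of_pos_left hz' hy' hy).1 (h.trans (div_le_div_of_nonneg_right hz hy.le))

theorem reducedMap_injOn {a : Fin 4 → ℝ} {c : Fin 3 → ℝ} (ha : ∀ k, 0 < a k)
    (hc : ∀ r, 0 ≤ c r) : Set.InjOn (reducedMap a c) {ξ | ∀ j, 0 < ξ j} := by
  intro ξ hξ ξ' hξ' h
  wlog hz : ξ 2 ≤ ξ' 2 generalizing ξ ξ'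
  · exact (this hξ' hξ h.symm (le_of_not_ge hz)).symm
  have h₀ := congrFun h 0
  have h₁ := congrFun h 1
  have h₂ := congrFun h 2
  simp only [reducedMap, Matrix.cons_val_zero, Matrix.cons_val_one, Matrix.cons_val_two,
    Matrix.tail_cons, Matrix.head_cons] at h₀ h₁ h₂
  have hy : ξ 1 ≤ ξ' 1 := le_of_div_le_div_of_le (hξ 1) (hξ' 1) (hξ' 2) hz <| by
    nlinarith [ha 0, mul_nonneg (hc 0) (sub_nonneg.2 hz)]
  have hx : ξ 0 ≤ ξ' 0 := le_of_div_le_div_of_le (hξ 0) (hξ' 0) (hξ' 2) hz <| by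
    nlinarith [ha 3, mul_nonneg (ha 2).le (sub_nonneg.2 hy), mul_nonneg (hc 2) (sub_nonneg.2 hz)]
  have hx_eq : ξ 0 = ξ' 0 := by
    nlinarith [ha 1, mul_nonneg (hc 1) (sub_nonneg.2 hz)]
  have hz_eq : ξ 2 = ξ' 2 := by
    refine hz.antisymm (not_lt.1 fun hlt => ?_)
    have : ξ 2 / ξ 0 < ξ' 2 / ξ 0 := div_lt_div_of_pos_right hlt (hξ 0)
    rw [← hx_eq] at h₂
    nlinarith [ha 3, mul_nonneg (ha 2).le (sub_nonneg.2 hy), mul_nonneg (hc 2) (sub_nonneg.2 hz)]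
  have hy_eq : ξ 1 = ξ' 1 :=
    mul_left_cancel₀ (ha 2).ne' (by rw [← hx_eq, ← hz_eq] at h₂; linarith)
  funext j
  fin_cases j
  exacts [hx_eq, hy_eq, hz_eq]

theorem Fin.sum_univ_add_four {M : Type*} [AddCommMonoid M] {n : ℕ} (f : Fin (n + 4) → M) :
    ∑ i, f i = f 0 + f 1 + f 2 + f 3 + ∑ i : Fin n, f (i.addNat 4) := by
  simp only [Fin.sum_univ_succ, add_assoc]
  rfl

section Network

variable (n : ℕ)

theorem PsiB_zero (ξ : Fin 3 → ℝ) : PsiB n ξ 0 = ξ 2 / ξ 1 := by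
  simp [PsiB, Bmat, Real.rpow_neg_one, div_eq_mul_inv, mul_comm]

theorem PsiB_one (ξ : Fin 3 → ℝ) : PsiB n ξ 1 = ξ 0 := by
  simp (disch := omega) [PsiB, Bmat, Nat.mod_eq_of_lt]

theorem PsiB_two (ξ : Fin 3 → ℝ) : PsiB n ξ 2 = ξ 1 := by
  simp (disch := omega) [PsiB, Bmat, Nat.mod_eq_of_lt]

theorem PsiB_three (ξ : Fin 3 → ℝ) : PsiB n ξ 3 = ξ 2 / ξ 0 := by
  simp (disch := omega) [PsiB, Bmat, Nat.mod_eq_of_lt, Real.rpow_neg_one, div_eq_mul_inv,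
    mul_comm, -Fin.val_eq_zero_iff]

theorem PsiB_addNat_four (ξ : Fin 3 → ℝ) (i : Fin (2 * n)) : PsiB n ξ (i.addNat 4) = ξ 2 := by
  simp [PsiB, Bmat, -Fin.val_eq_zero_iff]

theorem Amat_nonneg (r : Fin 3) (i : Fin (2 * n + 4)) : 0 ≤ Amat n r i := by
  simp only [Amat, Matrix.of_apply]
  split_ifs <;> norm_num

def tailWeight (a : Fin (2 * n + 4) → ℝ) (r : Fin 3) : ℝ :=
  ∑ i : Fin (2 * n), Amat n r (i.addNat 4) * a (i.addNat 4)

theorem tailWeight_nonneg {a : Fin (2 * n + 4) → ℝ} (ha : ∀ i, 0 ≤ a i) (r : Fin 3) :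
    0 ≤ tailWeight n a r :=
  Finset.sum_nonneg fun _ _ => mul_nonneg (Amat_nonneg n r _) (ha _)

theorem Amat_mulVec_hadamard_PsiB (a : Fin (2 * n + 4) → ℝ) (ξ : Fin 3 → ℝ) :
    Amat n *ᵥ (fun i => a i * PsiB n ξ i) =
      reducedMap ![a 0, a 1, a 2, a 3] (tailWeight n a) ξ := by
  ext r
  simp only [mulVec, dotProduct, Fin.sum_univ_add_four, PsiB_zero, PsiB_one, PsiB_two,
    PsiB_three, PsiB_addNat_four, ← mul_assoc, ← Finset.sum_mul]
  change _ + tailWeight n a r * ξ 2 = _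
  generalize tailWeight n a = c
  fin_cases r <;>
    simp (disch := omega) [Amat, reducedMap, Nat.mod_eq_of_lt, -Fin.val_eq_zero_iff]

end Network

theorem injectivity_of_monomial_map_general (n : ℕ)
    (a : Fin (2*n+4) → ℝ) (ha : ∀ i, 0 < a i) :
    ∀ ξ ξ' : Fin 3 → ℝ, (∀ j, 0 < ξ j) → (∀ j, 0 < ξ' j) →
      (Amat n).mulVec (fun i => a i * PsiB n ξ i)
        = (Amat n).mulVec (fun i => a i * PsiB n ξ' i) →
      ξ = ξ' := by
  intro ξ ξ' hξ hξ' h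
  rw [Amat_mulVec_hadamard_PsiB, Amat_mulVec_hadamard_PsiB] at h
  refine reducedMap_injOn (fun k => ?_) (tailWeight_nonneg n fun i => (ha i).le) hξ hξ' h
  fin_cases k <;> exact ha _

/-- For every positive vector `a`, the map `ξ ↦ 𝒜·(a ∘ Ψ_B(ξ))` (with `∘` the
componentwise product) is injective on positive vectors `ξ`. -/
theorem injectivity_of_monomial_map (n : ℕ) (hn : 1 ≤ n)
    (a : Fin (2*n+4) → ℝ) (ha : ∀ i, 0 < a i) :
    ∀ ξ ξ' : Fin 3 → ℝ, (∀ j, 0 < ξ j) → (∀ j, 0 < ξ' j) →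
      (Amat n).mulVec (fun i => a i * PsiB n ξ i)
        = (Amat n).mulVec (fun i => a i * PsiB n ξ' i) →
      ξ = ξ' :=
  injectivity_of_monomial_map_general n a ha

end
end
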